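/- arXiv:1904.07420 — 7 statements merged into one kernel-verified Lean document; each statement's English description precedes it below -/
import Mathlib

section
/- Let G be a graph whose connected components are G_1, ..., G_m. Then p(G) = p(G_1) + p(G_2) + ... + p(G_m). -/
open SimpleGraph

/-- Adjacency in the phylogeny graph of a digraph `D`: `u ≠ v` and either an arc between
them or a common out-neighbor. -/
def phyAdj {α : Type*} (D : α → α → Prop) (u v : α) : Prop :=
  u ≠ v ∧ (D u v ∨ D v u ∨ ∃ w, D u w ∧ D v w)

/-- `D`, a digraph on the vertices of `G` together with `r` extra vertices, is a
phylogeny digraph for `G`: it is acyclic, `G` is the subgraph of the phylogeny graph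
induced on `V(G)`, and there are no arcs from the extra vertices into `V(G)`. -/
def IsPhyDigraphOn {V : Type*} (G : SimpleGraph V) (r : ℕ)
    (D : (V ⊕ Fin r) → (V ⊕ Fin r) → Prop) : Prop :=
  (∀ x, ¬ Relation.TransGen D x x) ∧
  (∀ u v : V, G.Adj u v ↔ phyAdj D (Sum.inl u) (Sum.inl v)) ∧
  (∀ (j : Fin r) (v : V), ¬ D (Sum.inr j) (Sum.inl v))

/-- The phylogeny number `p(G)`: the least number of extra vertices in a phylogeny
digraph for `G`. -/
noncomputable def phylogenyNumber {V : Type*} (G : SimpleGraph V) : ℕ :=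
  sInf {r | ∃ D, IsPhyDigraphOn G r D}

/-- The competition number `k(G)`: the least `k` so that `G` together with `k` isolated
vertices is the competition graph of an acyclic digraph. -/
noncomputable def competitionNumber {V : Type*} (G : SimpleGraph V) : ℕ :=
  sInf {k | ∃ D : (V ⊕ Fin k) → (V ⊕ Fin k) → Prop,
    (∀ x, ¬ Relation.TransGen D x x) ∧
    (∀ a b, (a ≠ b ∧ ∃ c, D a c ∧ D b c) ↔
      (∃ u v : V, a = Sum.inl u ∧ b = Sum.inl v ∧ G.Adj u v))}

/-- The number of triangles of `G`. -/
noncomputable def triangleCount {V : Type*} (G : SimpleGraph V) : ℕ :=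
  Set.ncard {S : Finset V | G.IsNClique 3 S}

/-- `S` carries a diamond (`K₄` minus an edge) subgraph of `G`. -/
def IsDiamondOn {V : Type*} (G : SimpleGraph V) (S : Finset V) : Prop :=
  ∃ x y z w : V, (S : Set V) = {x, y, z, w} ∧
    x ≠ y ∧ x ≠ z ∧ x ≠ w ∧ y ≠ z ∧ y ≠ w ∧ z ≠ w ∧
    G.Adj x y ∧ G.Adj x z ∧ G.Adj x w ∧ G.Adj y z ∧ G.Adj z w ∧ ¬ G.Adj y w

/-- The number of diamonds of `G`. -/
noncomputable def diamondCount {V : Type*} (G : SimpleGraph V) : ℕ :=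
  Set.ncard {S : Finset V | IsDiamondOn G S}

/-- The diamonds of `G` are mutually edge-disjoint. -/
def EdgeDisjointDiamonds {V : Type*} (G : SimpleGraph V) : Prop :=
  ∀ S₁ S₂ : Finset V, IsDiamondOn G S₁ → IsDiamondOn G S₂ → S₁ ≠ S₂ →
    ∀ u v, G.Adj u v → u ∈ S₁ → v ∈ S₁ → u ∈ S₂ → v ∈ S₂ → False

/-- `G⁻`: the graph obtained from `G` by deleting every edge lying on a triangle. -/
def triangleEdgeDeleted {V : Type*} (G : SimpleGraph V) : SimpleGraph V where
  Adj u v := G.Adj u v ∧ ∀ w, ¬ (G.Adj u w ∧ G.Adj v w)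
  symm := ⟨fun u v h => ⟨h.1.symm, fun w hw => h.2 w ⟨hw.2, hw.1⟩⟩⟩
  loopless := ⟨fun v h => G.loopless.irrefl v h.1⟩

/-- The edge clique cover number `θₑ(G)`. -/
noncomputable def edgeCliqueCoverNumber {V : Type*} (G : SimpleGraph V) : ℕ :=
  sInf {n | ∃ F : Fin n → Set V, (∀ i, G.IsClique (F i)) ∧
    ∀ u v, G.Adj u v → ∃ i, u ∈ F i ∧ v ∈ F i}

/-- `s` is a maximal clique of the graph `G`. -/
def IsMaxCliqueOf {V : Type*} (G : SimpleGraph V) (s : Set V) : Prop :=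
  G.IsClique s ∧ ∀ t, G.IsClique t → s ⊆ t → s = t

/-- `s` is a clique of the subgraph `H` of `G`. -/
def CliqueInSub {V : Type*} {G : SimpleGraph V} (H : G.Subgraph) (s : Set V) : Prop :=
  s ⊆ H.verts ∧ s.Pairwise H.Adj

/-- `s` is a maximal clique of the subgraph `H` of `G`. -/
def MaxCliqueInSub {V : Type*} {G : SimpleGraph V} (H : G.Subgraph) (s : Set V) : Prop :=
  CliqueInSub H s ∧ ∀ t, CliqueInSub H t → s ⊆ t → s = t

/-- `s` is a clique of the graph with adjacency `X` and vertex set `S`. -/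
def CliqueRel {α : Type*} (X : SimpleGraph α) (S s : Set α) : Prop :=
  s ⊆ S ∧ X.IsClique s

/-- `s` is a maximal clique of the graph with adjacency `X` and vertex set `S`. -/
def MaxCliqueRel {α : Type*} (X : SimpleGraph α) (S s : Set α) : Prop :=
  CliqueRel X S s ∧ ∀ t, CliqueRel X S t → s ⊆ t → s = t

/-- `v` is a cut-vertex of `G`: some two other vertices are connected in `G` but every
walk between them passes through `v`. -/
def IsCutVertex {V : Type*} (G : SimpleGraph V) (v : V) : Prop :=
  ∃ u w, u ≠ v ∧ w ≠ v ∧ G.Reachable u w ∧ ∀ p : G.Walk u w, v ∈ p.support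

/-- `B` is a block of `G`: a maximal connected subgraph without a cut-vertex. -/
def IsBlockSub {V : Type*} {G : SimpleGraph V} (B : G.Subgraph) : Prop :=
  B.coe.Connected ∧ (∀ v, ¬ IsCutVertex B.coe v) ∧
  ∀ B' : G.Subgraph, B ≤ B' → B'.coe.Connected →
    (∀ v, ¬ IsCutVertex B'.coe v) → B' = B

/-- Generalized phylogeny digraph with arbitrary extra-vertex type. -/
def GoodOn {V β : Type*} (G : SimpleGraph V) (D : (V ⊕ β) → (V ⊕ β) → Prop) : Prop :=
  (∀ x, ¬ Relation.TransGen D x x) ∧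
  (∀ u v : V, G.Adj u v ↔ phyAdj D (Sum.inl u) (Sum.inl v)) ∧
  (∀ (j : β) (v : V), ¬ D (Sum.inr j) (Sum.inl v))

lemma transGen_map {α α' : Type*} {D : α' → α' → Prop} (m : α → α') {a b : α}
    (h : Relation.TransGen (fun x y => D (m x) (m y)) a b) :
    Relation.TransGen D (m a) (m b) := by
  induction h with
  | single h => exact .single h
  | tail _ h2 ih => exact ih.tail h2

lemma goodOn_congr {V β γ : Type*} (G : SimpleGraph V) (e : β ≃ γ)
    {D : (V ⊕ γ) → (V ⊕ γ) → Prop} (hD : GoodOn G D) :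
    GoodOn G (fun x y => D ((Equiv.sumCongr (Equiv.refl V) e) x)
      ((Equiv.sumCongr (Equiv.refl V) e) y)) := by
  obtain ⟨hac, hadj, hno⟩ := hD
  set m := Equiv.sumCongr (Equiv.refl V) e with hm
  refine ⟨fun x hx => hac (m x) (transGen_map m hx), fun u v => ?_, fun j v h => hno (e j) v h⟩
  rw [hadj u v]
  have hml : ∀ u : V, m (Sum.inl u) = Sum.inl u := fun _ => rfl
  constructor
  · rintro ⟨hne, harc⟩
    refine ⟨fun h => hne (by injection h with h; rw [h]), ?_⟩
    rcases harc with h | h | ⟨w, h1, h2⟩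
    · exact Or.inl h
    · exact Or.inr (Or.inl h)
    · exact Or.inr (Or.inr ⟨m.symm w, by simpa [hml] using h1, by simpa [hml] using h2⟩)
  · rintro ⟨hne, harc⟩
    refine ⟨fun h => hne (by injection h with h; rw [h]), ?_⟩
    rcases harc with h | h | ⟨w, h1, h2⟩
    · exact Or.inl h
    · exact Or.inr (Or.inl h)
    · exact Or.inr (Or.inr ⟨m w, h1, h2⟩)

lemma mem_of_goodOn {V β : Type*} [Fintype β] (G : SimpleGraph V)
    {D : (V ⊕ β) → (V ⊕ β) → Prop} (hD : GoodOn G D) :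
    Fintype.card β ∈ {r | ∃ D, IsPhyDigraphOn G r D} := by
  have e : Fin (Fintype.card β) ≃ β := (Fintype.equivFin β).symm
  exact ⟨_, goodOn_congr G e hD⟩

lemma phy_le_of_goodOn {V β : Type*} [Fintype β] (G : SimpleGraph V)
    {D : (V ⊕ β) → (V ⊕ β) → Prop} (hD : GoodOn G D) :
    phylogenyNumber G ≤ Fintype.card β :=
  Nat.sInf_le (mem_of_goodOn G hD)

/-- Existence of some phylogeny digraph: one extra vertex per edge. -/
lemma exists_goodOn {V : Type*} (G : SimpleGraph V) :
    ∃ D : (V ⊕ G.edgeSet) → (V ⊕ G.edgeSet) → Prop, GoodOn G D := by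
  classical
  refine ⟨fun x y => ∃ (u : V) (e : G.edgeSet), x = Sum.inl u ∧ y = Sum.inr e ∧
    u ∈ (e : Sym2 V), ?_, ?_, ?_⟩
  · intro x hx
    have key : ∀ a b, Relation.TransGen (fun x y => ∃ (u : V) (e : G.edgeSet),
        x = Sum.inl u ∧ y = Sum.inr e ∧ u ∈ (e : Sym2 V)) a b →
        (∃ u : V, a = Sum.inl u) ∧ (∃ e : G.edgeSet, b = Sum.inr e) := by
      intro a b h
      induction h with
      | single h => obtain ⟨u, e, h1, h2, _⟩ := h; exact ⟨⟨u, h1⟩, ⟨e, h2⟩⟩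
      | tail _ h2 ih =>
        obtain ⟨u, e, h1, h2', _⟩ := h2
        obtain ⟨_, ⟨e', he'⟩⟩ := ih
        rw [he'] at h1; exact absurd h1 (by simp)
    obtain ⟨⟨u, hu⟩, ⟨e, he⟩⟩ := key x x hx
    rw [hu] at he; exact absurd he (by simp)
  · intro u v
    constructor
    · intro h
      refine ⟨by simpa using h.ne, Or.inr (Or.inr ⟨Sum.inr ⟨s(u,v), h⟩, ⟨u, _, rfl, rfl, by simp⟩,
        ⟨v, _, rfl, rfl, by simp⟩⟩)⟩
    · rintro ⟨hne, h | h | ⟨w, h1, h2⟩⟩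
      · obtain ⟨_, _, _, h, _⟩ := h; exact absurd h (by simp)
      · obtain ⟨_, _, _, h, _⟩ := h; exact absurd h (by simp)
      · obtain ⟨u', e, hu', hw, hue⟩ := h1
        obtain ⟨v', e', hv', hw', hve⟩ := h2
        obtain rfl : u = u' := by simpa using hu'
        obtain rfl : v = v' := by simpa using hv'
        rw [hw] at hw'
        obtain rfl : e = e' := by simpa using hw'
        have hne' : u ≠ v := fun h => hne (by rw [h])
        have := (Sym2.mem_and_mem_iff hne').mp ⟨hue, hve⟩
        have he := e.2
        rw [this] at he
        exact he
  · rintro j v ⟨u, e, h, _, _⟩; exact absurd h (by simp)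

lemma phy_set_nonempty {V : Type*} [Fintype V] (G : SimpleGraph V) :
    {r | ∃ D, IsPhyDigraphOn G r D}.Nonempty := by
  classical
  obtain ⟨D, hD⟩ := exists_goodOn G
  haveI : Fintype G.edgeSet := Fintype.ofFinite _
  exact ⟨_, mem_of_goodOn G hD⟩

lemma induce_adj' {V : Type*} (G : SimpleGraph V) (s : Set V) (a b : s) :
    (G.induce s).Adj a b ↔ G.Adj a b := by simp

lemma phy_le_sum {V : Type*} [Fintype V] (G : SimpleGraph V) :
    phylogenyNumber G ≤ ∑ᶠ c : G.ConnectedComponent, phylogenyNumber (G.induce c.supp) := by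
  classical
  haveI : Fintype G.ConnectedComponent := Fintype.ofFinite _
  rw [finsum_eq_sum_of_fintype]
  have hD : ∀ c : G.ConnectedComponent,
      ∃ D, IsPhyDigraphOn (G.induce c.supp) (phylogenyNumber (G.induce c.supp)) D :=
    fun c => Nat.sInf_mem (phy_set_nonempty (G.induce c.supp))
  choose D hDg using hD
  set ι : ∀ c : G.ConnectedComponent,
      (↥c.supp ⊕ Fin (phylogenyNumber (G.induce c.supp))) →
        V ⊕ (Σ c : G.ConnectedComponent, Fin (phylogenyNumber (G.induce c.supp))) :=
    fun c => Sum.map Subtype.val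
      (fun j => (⟨c, j⟩ : Σ c : G.ConnectedComponent, Fin (phylogenyNumber (G.induce c.supp)))) with hι
  have hinj : ∀ c, Function.Injective (ι c) := by
    intro c
    exact Function.Injective.sumMap Subtype.val_injective (fun j j' h => by simpa using h)
  set comp : V ⊕ (Σ c : G.ConnectedComponent, Fin (phylogenyNumber (G.induce c.supp))) →
      G.ConnectedComponent :=
    Sum.elim (fun v => G.connectedComponentMk v) (fun x => x.1) with hcompdef
  have hcomp : ∀ c a, comp (ι c a) = c := by
    rintro c (⟨v, hv⟩ | j)
    · exact (ConnectedComponent.mem_supp_iff c v).mp hv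
    · rfl
  set Dbig : (V ⊕ (Σ c : G.ConnectedComponent, Fin (phylogenyNumber (G.induce c.supp)))) →
      (V ⊕ (Σ c : G.ConnectedComponent, Fin (phylogenyNumber (G.induce c.supp)))) → Prop :=
    fun x y => ∃ c a b, ι c a = x ∧ ι c b = y ∧ D c a b with hDbig
  have key : ∀ x y, Relation.TransGen Dbig x y →
      ∃ c a b, ι c a = x ∧ ι c b = y ∧ Relation.TransGen (D c) a b := by
    intro x y h
    induction h with
    | single h =>
      obtain ⟨c, a, b, h1, h2, h3⟩ := h
      exact ⟨c, a, b, h1, h2, .single h3⟩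
    | tail _ h2 ih =>
      obtain ⟨c, a, b, ha, hb, htg⟩ := ih
      obtain ⟨c', a', b', ha', hb', hd⟩ := h2
      obtain rfl : c = c' := by rw [← hcomp c b, ← hcomp c' a', hb, ha']
      obtain rfl : a' = b := hinj c (ha'.trans hb.symm)
      exact ⟨c, a, b', ha, hb', htg.tail hd⟩
  have hgood : GoodOn G Dbig := by
    refine ⟨?_, ?_, ?_⟩
    · intro x hx
      obtain ⟨c, a, b, ha, hb, htg⟩ := key x x hx
      obtain rfl : a = b := hinj c (ha.trans hb.symm)
      exact (hDg c).1 a htg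
    · intro u v
      constructor
      · intro h
        set c := G.connectedComponentMk u with hc
        have hu : u ∈ c.supp := (ConnectedComponent.mem_supp_iff c u).mpr rfl
        have hv : v ∈ c.supp := (ConnectedComponent.mem_supp_iff c v).mpr
          (ConnectedComponent.sound h.symm.reachable)
        have hadj : (G.induce c.supp).Adj ⟨u, hu⟩ ⟨v, hv⟩ := (induce_adj' G _ _ _).mpr h
        obtain ⟨hne, harc⟩ := ((hDg c).2.1 ⟨u, hu⟩ ⟨v, hv⟩).mp hadj
        refine ⟨fun he => h.ne (Sum.inl_injective he), ?_⟩
        rcases harc with h1 | h1 | ⟨w, h1, h2⟩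
        · exact Or.inl ⟨c, Sum.inl ⟨u, hu⟩, Sum.inl ⟨v, hv⟩, rfl, rfl, h1⟩
        · exact Or.inr (Or.inl ⟨c, Sum.inl ⟨v, hv⟩, Sum.inl ⟨u, hu⟩, rfl, rfl, h1⟩)
        · exact Or.inr (Or.inr ⟨ι c w, ⟨c, Sum.inl ⟨u, hu⟩, w, rfl, rfl, h1⟩,
            ⟨c, Sum.inl ⟨v, hv⟩, w, rfl, rfl, h2⟩⟩)
      · rintro ⟨hne, harc⟩
        have hne' : u ≠ v := fun h => hne (by rw [h])
        rcases harc with ⟨c, a, b, ha, hb, hd⟩ | ⟨c, a, b, ha, hb, hd⟩ | ⟨w, h1, h2⟩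
        · obtain ⟨au, rfl⟩ : ∃ au, a = Sum.inl au := by
            cases a with
            | inl au => exact ⟨au, rfl⟩
            | inr j => exact absurd ha (by simp [hι])
          obtain ⟨bv, rfl⟩ : ∃ bv, b = Sum.inl bv := by
            cases b with
            | inl bv => exact ⟨bv, rfl⟩
            | inr j => exact absurd hb (by simp [hι])
          have hau : (au : V) = u := Sum.inl_injective ha
          have hbv : (bv : V) = v := Sum.inl_injective hb
          have : (G.induce c.supp).Adj au bv := ((hDg c).2.1 au bv).mpr
            ⟨fun h => hne' (by rw [← hau, ← hbv, Sum.inl_injective h]), Or.inl hd⟩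
          rw [induce_adj', hau, hbv] at this
          exact this
        · obtain ⟨au, rfl⟩ : ∃ au, a = Sum.inl au := by
            cases a with
            | inl au => exact ⟨au, rfl⟩
            | inr j => exact absurd ha (by simp [hι])
          obtain ⟨bv, rfl⟩ : ∃ bv, b = Sum.inl bv := by
            cases b with
            | inl bv => exact ⟨bv, rfl⟩
            | inr j => exact absurd hb (by simp [hι])
          have hau : (au : V) = v := Sum.inl_injective ha
          have hbv : (bv : V) = u := Sum.inl_injective hb
          have : (G.induce c.supp).Adj au bv := ((hDg c).2.1 au bv).mpr
            ⟨fun h => hne' (by rw [← hau, ← hbv, Sum.inl_injective h]), Or.inl hd⟩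
          rw [induce_adj', hau, hbv] at this
          exact this.symm
        · obtain ⟨c, a, b, ha, hb, hd⟩ := h1
          obtain ⟨c', a', b', ha', hb', hd'⟩ := h2
          obtain rfl : c = c' := by rw [← hcomp c b, ← hcomp c' b', hb, hb']
          have hbb : b' = b := hinj c (hb'.trans hb.symm)
          rw [hbb] at hd'
          obtain ⟨au, rfl⟩ : ∃ au, a = Sum.inl au := by
            cases a with
            | inl au => exact ⟨au, rfl⟩
            | inr j => exact absurd ha (by simp [hι])
          obtain ⟨av, rfl⟩ : ∃ av, a' = Sum.inl av := by
            cases a' with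
            | inl av => exact ⟨av, rfl⟩
            | inr j => exact absurd ha' (by simp [hι])
          have hau : (au : V) = u := Sum.inl_injective ha
          have hav : (av : V) = v := Sum.inl_injective ha'
          have : (G.induce c.supp).Adj au av := ((hDg c).2.1 au av).mpr
            ⟨fun h => hne' (by rw [← hau, ← hav, Sum.inl_injective h]),
             Or.inr (Or.inr ⟨b, hd, hd'⟩)⟩
          rw [induce_adj', hau, hav] at this
          exact this
    · rintro j v ⟨c, a, b, ha, hb, hd⟩
      obtain ⟨ja, rfl⟩ : ∃ ja, a = Sum.inr ja := by
        cases a with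
        | inl au => exact absurd ha (by simp [hι])
        | inr ja => exact ⟨ja, rfl⟩
      obtain ⟨bv, rfl⟩ : ∃ bv, b = Sum.inl bv := by
        cases b with
        | inl bv => exact ⟨bv, rfl⟩
        | inr jb => exact absurd hb (by simp [hι])
      exact (hDg c).2.2 ja bv hd
  have h1 := phy_le_of_goodOn G hgood
  have h2 : Fintype.card (Σ c : G.ConnectedComponent,
      Fin (phylogenyNumber (G.induce c.supp))) =
      ∑ c : G.ConnectedComponent, phylogenyNumber (G.induce c.supp) := by
    simp [Fintype.card_sigma]
  rw [h2] at h1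
  exact h1

lemma sum_le_phy {V : Type*} [Fintype V] (G : SimpleGraph V) :
    (∑ᶠ c : G.ConnectedComponent, phylogenyNumber (G.induce c.supp)) ≤
      phylogenyNumber G := by
  classical
  haveI : Fintype G.ConnectedComponent := Fintype.ofFinite _
  rw [finsum_eq_sum_of_fintype]
  obtain ⟨Dbig, hac, hadj, hno⟩ := Nat.sInf_mem (phy_set_nonempty G)
  set r := phylogenyNumber G with hr
  set E : G.ConnectedComponent → Finset (Fin r) := fun c =>
    Finset.univ.filter (fun j => ∃ u, G.connectedComponentMk u = c ∧
      Dbig (Sum.inl u) (Sum.inr j)) with hE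
  have hEmem : ∀ c j, j ∈ E c ↔ ∃ u, G.connectedComponentMk u = c ∧
      Dbig (Sum.inl u) (Sum.inr j) := by
    intro c j; simp [hE]
  have hdisj : ∀ c c', c ≠ c' → Disjoint (E c) (E c') := by
    intro c c' hne
    rw [Finset.disjoint_left]
    intro j hj hj'
    obtain ⟨u, hu, hdu⟩ := (hEmem c j).mp hj
    obtain ⟨u', hu', hdu'⟩ := (hEmem c' j).mp hj'
    rcases eq_or_ne u u' with rfl | huu
    · exact hne (hu.symm.trans hu')
    · have : G.Adj u u' := (hadj u u').mpr
        ⟨fun h => huu (Sum.inl_injective h), Or.inr (Or.inr ⟨Sum.inr j, hdu, hdu'⟩)⟩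
      exact hne (hu ▸ hu' ▸ ConnectedComponent.sound this.reachable)
  have hcle : ∀ c : G.ConnectedComponent,
      phylogenyNumber (G.induce c.supp) ≤ (E c).card := by
    intro c
    set κ : (↥c.supp ⊕ ↥(E c)) → V ⊕ Fin r :=
      Sum.map Subtype.val Subtype.val with hκ
    have hgood : GoodOn (G.induce c.supp) (fun a b => Dbig (κ a) (κ b)) := by
      refine ⟨?_, ?_, ?_⟩
      · intro x hx
        exact hac (κ x) (transGen_map κ hx)
      · intro u v
        rw [induce_adj', hadj]
        constructor
        · rintro ⟨hne, harc⟩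
          have hne' : (u : V) ≠ (v : V) := fun h => hne (by rw [h])
          refine ⟨fun h => hne' (Subtype.ext_iff.mp (Sum.inl_injective h)), ?_⟩
          rcases harc with h1 | h1 | ⟨w, h1, h2⟩
          · exact Or.inl h1
          · exact Or.inr (Or.inl h1)
          · -- w : V ⊕ Fin r; lift it to ↥c.supp ⊕ ↥(E c)
            cases w with
            | inl x =>
              have hux : (u : V) ≠ x := by
                rintro rfl
                exact hac _ (.single h1)
              have hadjux : G.Adj u x := (hadj u x).mpr
                ⟨fun h => hux (Sum.inl_injective h), Or.inl h1⟩
              have hxc : x ∈ c.supp := (ConnectedComponent.mem_supp_iff c x).mpr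
                ((ConnectedComponent.sound hadjux.symm.reachable).trans
                  ((ConnectedComponent.mem_supp_iff c ↑u).mp u.2))
              exact Or.inr (Or.inr ⟨Sum.inl ⟨x, hxc⟩, h1, h2⟩)
            | inr j =>
              have hj : j ∈ E c := (hEmem c j).mpr
                ⟨u, (ConnectedComponent.mem_supp_iff c u).mp u.2, h1⟩
              exact Or.inr (Or.inr ⟨Sum.inr ⟨j, hj⟩, h1, h2⟩)
        · rintro ⟨hne, harc⟩
          refine ⟨fun h => hne (by rw [Subtype.ext (Sum.inl_injective h)]), ?_⟩
          rcases harc with h1 | h1 | ⟨w, h1, h2⟩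
          · exact Or.inl h1
          · exact Or.inr (Or.inl h1)
          · exact Or.inr (Or.inr ⟨κ w, h1, h2⟩)
      · rintro ⟨j, hj⟩ v h
        exact hno j v h
    have := phy_le_of_goodOn (G.induce c.supp) hgood
    simpa using this
  calc (∑ c : G.ConnectedComponent, phylogenyNumber (G.induce c.supp)) ≤
      ∑ c : G.ConnectedComponent, (E c).card := Finset.sum_le_sum (fun c _ => hcle c)
    _ = (Finset.univ.biUnion E).card := (Finset.card_biUnion
        (fun c _ c' _ h => hdisj c c' h)).symm
    _ ≤ Fintype.card (Fin r) := Finset.card_le_univ _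
    _ = r := Fintype.card_fin r

theorem stmt3 {V : Type*} [Fintype V] (G : SimpleGraph V) :
    phylogenyNumber G =
      ∑ᶠ c : G.ConnectedComponent, phylogenyNumber (G.induce c.supp) :=
  le_antisymm (phy_le_sum G) (sum_le_phy G)
end

section
/- Let D be an acyclic digraph, let G be an induced subgraph of the phylogeny graph P(D), and let H be a subgraph of G such that (i) every maximal clique of H is a maximal clique of G, and (ii) any maximal clique of G contained in H and any maximal clique of G not contained in H share at most one vertex. Define D* with vertex set V(H) ∪ (V(D) \ V(G)) and arc set the union over x in X of all arcs of D from N_D^-[x] ∩ V(H) to x, where X is the set of vertices x in V(H) ∪ (V(D) \ V(G)) such that N_D^-[x] ∩ V(H) is a clique of size at least two in H. Then P(D*) contains H as an induced subgraph. -/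
open SimpleGraph

lemma exists_maxCliqueRel {α : Type*} (X : SimpleGraph α) (S s0 : Set α)
    (h : CliqueRel X S s0) : ∃ s, s0 ⊆ s ∧ MaxCliqueRel X S s := by
  obtain ⟨m, hm, hmax⟩ := zorn_subset_nonempty {s | CliqueRel X S s}
    (fun c hc hchain _ => ⟨⋃₀ c,
      ⟨fun x hx => by
        obtain ⟨t, htc, hxt⟩ := hx
        exact (hc htc).1 hxt,
       fun a ha b hb hab => by
        obtain ⟨ta, htac, hata⟩ := ha
        obtain ⟨tb, htbc, hbtb⟩ := hb
        rcases hchain.total htac htbc with h' | h'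
        · exact (hc htbc).2 (h' hata) hbtb hab
        · exact (hc htac).2 hata (h' hbtb) hab⟩,
      fun t ht => Set.subset_sUnion_of_mem ht⟩) s0 h
  exact ⟨m, hm, hmax.prop, fun t ht hmt => Set.Subset.antisymm hmt (hmax.2 ht hmt)⟩

theorem stmt4 {α : Type*} (D : α → α → Prop)
    (hac : ∀ x, ¬ Relation.TransGen D x x)
    (G H : SimpleGraph α) (SG SH : Set α)
    (hGind : ∀ u ∈ SG, ∀ v ∈ SG, (G.Adj u v ↔ phyAdj D u v))
    (hGsupp : ∀ u v, G.Adj u v → u ∈ SG ∧ v ∈ SG)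
    (hHG : H ≤ G) (hSH : SH ⊆ SG)
    (hHsupp : ∀ u v, H.Adj u v → u ∈ SH ∧ v ∈ SH)
    (hmax : ∀ s, MaxCliqueRel H SH s → MaxCliqueRel G SG s)
    (hshare : ∀ s t, MaxCliqueRel G SG s → CliqueRel H SH s →
      MaxCliqueRel G SG t → ¬ CliqueRel H SH t → (s ∩ t).Subsingleton) :
    ∀ u ∈ SH, ∀ v ∈ SH,
      (H.Adj u v ↔ phyAdj (fun a b =>
        ((b ∈ SH ∪ SGᶜ ∧ ((insert b {p | D p b}) ∩ SH).Pairwise H.Adj ∧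
            ((insert b {p | D p b}) ∩ SH).Nontrivial) ∧ a ∈ SH ∧ D a b)) u v) := by
  
  intro u hu v hv
  have clique0 : ∀ w : α, G.IsClique ((insert w {p | D p w}) ∩ SG) := by
    intro w a ha b hb hab
    obtain ⟨ha1, ha2⟩ := ha
    obtain ⟨hb1, hb2⟩ := hb
    refine (hGind a ha2 b hb2).mpr ⟨hab, ?_⟩
    rcases ha1 with rfl | ha1 <;> rcases hb1 with rfl | hb1
    · exact absurd rfl hab
    · exact Or.inr (Or.inl hb1)
    · exact Or.inl ha1
    · exact Or.inr (Or.inr ⟨w, ha1, hb1⟩)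
  constructor
  · intro huv
    have hne : u ≠ v := huv.ne
    have key : ∀ K : Set α, K ⊆ SG → G.IsClique K → u ∈ K → v ∈ K →
        K ⊆ SH ∧ K.Pairwise H.Adj := by
      intro K hKSG hKcl huK hvK
      have hpairuv : CliqueRel H SH {u, v} := by
        refine ⟨?_, ?_⟩
        · intro x hx; rcases hx with rfl | hx
          · exact hu
          · rcases hx with rfl; exact hv
        · intro a ha b hb hab
          rcases ha with rfl | ha <;> rcases hb with rfl | hb
          · exact absurd rfl hab
          · rcases hb with rfl; exact huv
          · rcases ha with rfl; exact huv.symm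
          · rcases ha with rfl; rcases hb with rfl; exact absurd rfl hab
      obtain ⟨s, hsub, hsmax⟩ := exists_maxCliqueRel H SH {u, v} hpairuv
      obtain ⟨t, htsub, htmax⟩ := exists_maxCliqueRel G SG K ⟨hKSG, hKcl⟩
      have hsG := hmax s hsmax
      have ht : CliqueRel H SH t := by
        by_contra hnot
        have hss := hshare s t hsG hsmax.1 htmax hnot
        exact hne (hss ⟨hsub (Set.mem_insert _ _), htsub huK⟩
          ⟨hsub (Set.mem_insert_of_mem _ rfl), htsub hvK⟩)
      exact ⟨fun x hx => ht.1 (htsub hx), Set.Pairwise.mono htsub ht.2⟩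
    have keyprey : ∀ w : α, D u w → D v w →
        ((insert w {p | D p w}) ∩ SG) ⊆ SH ∧
        ((insert w {p | D p w}) ∩ SG).Pairwise H.Adj := by
      intro w hDuw hDvw
      exact key _ Set.inter_subset_right (clique0 w)
        ⟨Set.mem_insert_of_mem _ hDuw, hSH hu⟩ ⟨Set.mem_insert_of_mem _ hDvw, hSH hv⟩
    rcases (hGind u (hSH hu) v (hSH hv)).mp (hHG huv) with ⟨hne', harc⟩
    refine ⟨hne, ?_⟩
    rcases harc with hDuv | hDvu | ⟨w, hDuw, hDvw⟩
    · have hK : ((insert v {p | D p v}) ∩ SH) ⊆ ((insert v {p | D p v}) ∩ SG) :=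
        Set.inter_subset_inter_right _ hSH
      have huK : u ∈ (insert v {p | D p v}) ∩ SH := ⟨Set.mem_insert_of_mem _ hDuv, hu⟩
      have hvK : v ∈ (insert v {p | D p v}) ∩ SH := ⟨Set.mem_insert _ _, hv⟩
      have := (key _ (hK.trans Set.inter_subset_right) ((clique0 v).subset hK)
        huK hvK).2
      exact Or.inl ⟨⟨Or.inl hv, this, ⟨u, huK, v, hvK, hne⟩⟩, hu, hDuv⟩
    · have hK : ((insert u {p | D p u}) ∩ SH) ⊆ ((insert u {p | D p u}) ∩ SG) :=
        Set.inter_subset_inter_right _ hSH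
      have huK : u ∈ (insert u {p | D p u}) ∩ SH := ⟨Set.mem_insert _ _, hu⟩
      have hvK : v ∈ (insert u {p | D p u}) ∩ SH := ⟨Set.mem_insert_of_mem _ hDvu, hv⟩
      have := (key _ (hK.trans Set.inter_subset_right) ((clique0 u).subset hK)
        huK hvK).2
      exact Or.inr (Or.inl ⟨⟨Or.inl hu, this, ⟨u, huK, v, hvK, hne⟩⟩, hv, hDvu⟩)
    · obtain ⟨hsub, hpair⟩ := keyprey w hDuw hDvw
      have hK : ((insert w {p | D p w}) ∩ SH) ⊆ ((insert w {p | D p w}) ∩ SG) :=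
        Set.inter_subset_inter_right _ hSH
      have hwmem : w ∈ SH ∪ SGᶜ := by
        by_cases hwSG : w ∈ SG
        · exact Or.inl (hsub ⟨Set.mem_insert _ _, hwSG⟩)
        · exact Or.inr hwSG
      have hpair' : ((insert w {p | D p w}) ∩ SH).Pairwise H.Adj := hpair.mono hK
      have huK : u ∈ (insert w {p | D p w}) ∩ SH := ⟨Set.mem_insert_of_mem _ hDuw, hu⟩
      have hvK : v ∈ (insert w {p | D p w}) ∩ SH := ⟨Set.mem_insert_of_mem _ hDvw, hv⟩
      have hnt : ((insert w {p | D p w}) ∩ SH).Nontrivial := ⟨u, huK, v, hvK, hne⟩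
      exact Or.inr (Or.inr ⟨w, ⟨⟨hwmem, hpair', hnt⟩, hu, hDuw⟩,
        ⟨⟨hwmem, hpair', hnt⟩, hv, hDvw⟩⟩)
  · rintro ⟨hne, h | h | ⟨w, hw1, hw2⟩⟩
    · obtain ⟨⟨-, hpair, -⟩, huSH, hDuv⟩ := h
      exact hpair ⟨Set.mem_insert_of_mem _ hDuv, hu⟩ ⟨Set.mem_insert _ _, hv⟩ hne
    · obtain ⟨⟨-, hpair, -⟩, hvSH, hDvu⟩ := h
      exact (hpair ⟨Set.mem_insert_of_mem _ hDvu, hv⟩ ⟨Set.mem_insert _ _, hu⟩ hne.symm).symm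
    · obtain ⟨⟨-, hpair, -⟩, -, hDuw⟩ := hw1
      obtain ⟨-, -, hDvw⟩ := hw2
      exact hpair ⟨Set.mem_insert_of_mem _ hDuw, hu⟩ ⟨Set.mem_insert_of_mem _ hDvw, hv⟩ hne
end

section
/- If G is a graph with a pendant vertex v (a vertex of degree one), then p(G) = p(G − v). -/
open SimpleGraph

private lemma phyAdj_comm {α : Type*} {D : α → α → Prop} {u v : α} :
    phyAdj D u v ↔ phyAdj D v u := by
  unfold phyAdj; tauto

theorem stmt10 {V : Type*} (G : SimpleGraph V) (v : V)
    (hpend : ∃! u, G.Adj v u) :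
    phylogenyNumber G = phylogenyNumber (G.induce {u | u ≠ v}) := by
  obtain ⟨u₀, hadj, huniq⟩ := hpend
  have hvu0 : v ≠ u₀ := G.ne_of_adj hadj
  have hGv : ∀ w, G.Adj v w ↔ w = u₀ := fun w =>
    ⟨fun h => huniq w h, fun h => h ▸ hadj⟩
  unfold phylogenyNumber
  congr 1
  ext r
  simp only [Set.mem_setOf_eq]
  -- the embedding
  set e : (({u : V | u ≠ v} : Set V) ⊕ Fin r) → V ⊕ Fin r :=
    Sum.map Subtype.val id with he
  have hinj : Function.Injective e :=
    Subtype.val_injective.sumMap Function.injective_id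
  have hev : ∀ a, e a ≠ Sum.inl v := by
    rintro (⟨x, hx⟩ | j) h
    · exact hx (by simpa [he] using h)
    · simp [he] at h
  constructor
  · -- from a phylogeny digraph for G, restrict to get one for G - v
    rintro ⟨D, hac, hph, hno⟩
    refine ⟨fun a b => D (e a) (e b), ?_, ?_, ?_⟩
    · intro x h
      exact hac (e x) (Relation.TransGen.lift e (fun _ _ h => h) _ _ h)
    · rintro ⟨u, hu⟩ ⟨w, hw⟩
      have hu' : u ≠ v := hu
      have hw' : w ≠ v := hw
      have hind : (G.induce {u | u ≠ v}).Adj ⟨u, hu⟩ ⟨w, hw⟩ ↔ G.Adj u w := Iff.rfl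
      rw [hind, hph u w]
      constructor
      · rintro ⟨hne, hc⟩
        refine ⟨fun h => hne (by simpa [he] using congrArg e h), ?_⟩
        rcases hc with h | h | ⟨z, hz1, hz2⟩
        · exact Or.inl h
        · exact Or.inr (Or.inl h)
        · refine Or.inr (Or.inr ?_)
          rcases z with y | j
          · by_cases hyv : y = v
            · exfalso
              subst hyv
              have h1 : G.Adj u y := (hph u y).mpr ⟨fun h => hu' (Sum.inl.inj h), Or.inl hz1⟩
              have h2 : G.Adj w y := (hph w y).mpr ⟨fun h => hw' (Sum.inl.inj h), Or.inl hz2⟩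
              have : u = u₀ := huniq u h1.symm
              have : u = w := this.trans (huniq w h2.symm).symm
              exact hne (by simp [this])
            · exact ⟨Sum.inl ⟨y, hyv⟩, hz1, hz2⟩
          · exact ⟨Sum.inr j, hz1, hz2⟩
      · rintro ⟨hne, hc⟩
        refine ⟨fun h => hne (hinj h), ?_⟩
        rcases hc with h | h | ⟨z, hz1, hz2⟩
        · exact Or.inl h
        · exact Or.inr (Or.inl h)
        · exact Or.inr (Or.inr ⟨e z, hz1, hz2⟩)
    · rintro j ⟨u, hu⟩ h
      exact hno j u h
  · -- from a phylogeny digraph for G - v, extend to one for G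
    rintro ⟨D, hac, hph, hno⟩
    set D2 : (V ⊕ Fin r) → (V ⊕ Fin r) → Prop :=
      fun x y => (∃ a b, x = e a ∧ y = e b ∧ D a b) ∨
        (x = Sum.inl u₀ ∧ y = Sum.inl v) with hD2
    have hvnoout : ∀ y, ¬ D2 (Sum.inl v) y := by
      rintro y (⟨a, b, ha, _, _⟩ | ⟨h1, _⟩)
      · exact hev a ha.symm
      · exact hvu0 (Sum.inl.inj h1)
    have hintov : ∀ x, D2 x (Sum.inl v) → x = Sum.inl u₀ := by
      rintro x (⟨a, b, _, hb, _⟩ | ⟨h1, _⟩)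
      · exact absurd hb.symm (hev b)
      · exact h1
    refine ⟨D2, ?_, ?_, ?_⟩
    · -- acyclicity
      have key : ∀ x y, Relation.TransGen D2 x y →
          y = Sum.inl v ∨ ∃ a b, x = e a ∧ y = e b ∧ Relation.TransGen D a b := by
        intro x y h
        induction h with
        | single h =>
          rcases h with ⟨a, b, ha, hb, hab⟩ | ⟨_, h2⟩
          · exact Or.inr ⟨a, b, ha, hb, Relation.TransGen.single hab⟩
          · exact Or.inl h2
        | tail _ h2 ih =>
          rcases h2 with ⟨a, b, ha, hb, hab⟩ | ⟨_, h2⟩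
          · rcases ih with hiv | ⟨a', b', ha', hb', htg⟩
            · exact absurd ha.symm (hiv ▸ hev a)
            · have : b' = a := hinj (hb'.symm.trans ha)
              exact Or.inr ⟨a', b, ha', hb, Relation.TransGen.tail (this ▸ htg) hab⟩
          · exact Or.inl h2
      intro x h
      rcases key x x h with hxv | ⟨a, b, ha, hb, htg⟩
      · subst hxv
        obtain ⟨y, hy, _⟩ := Relation.TransGen.head'_iff.mp h
        exact hvnoout y hy
      · have : a = b := hinj (ha.symm.trans hb)
        exact hac a (this ▸ htg)
    · -- adjacency
      have main : ∀ (u w : V) (hu : u ≠ v) (hw : w ≠ v),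
          G.Adj u w ↔ phyAdj D2 (Sum.inl u) (Sum.inl w) := by
        intro u w hu hw
        have hind : G.Adj u w ↔ (G.induce {u | u ≠ v}).Adj ⟨u, hu⟩ ⟨w, hw⟩ := Iff.rfl
        rw [hind, hph ⟨u, hu⟩ ⟨w, hw⟩]
        have heu : e (Sum.inl ⟨u, hu⟩) = Sum.inl u := rfl
        have hew : e (Sum.inl ⟨w, hw⟩) = Sum.inl w := rfl
        constructor
        · rintro ⟨hne, hc⟩
          refine ⟨fun h => hne (hinj (by rw [heu, hew, h])), ?_⟩
          rcases hc with h | h | ⟨z, hz1, hz2⟩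
          · exact Or.inl (Or.inl ⟨_, _, heu.symm, hew.symm, h⟩)
          · exact Or.inr (Or.inl (Or.inl ⟨_, _, hew.symm, heu.symm, h⟩))
          · exact Or.inr (Or.inr ⟨e z, Or.inl ⟨_, _, heu.symm, rfl, hz1⟩,
              Or.inl ⟨_, _, hew.symm, rfl, hz2⟩⟩)
        · rintro ⟨hne, hc⟩
          have hne' : u ≠ w := fun h => hne (by simp [h])
          refine ⟨fun h => hne (by rw [← heu, ← hew, h]), ?_⟩
          have arc : ∀ (x y : V) (hx : x ≠ v) (hy : y ≠ v),
              D2 (Sum.inl x) (Sum.inl y) → D (Sum.inl ⟨x, hx⟩) (Sum.inl ⟨y, hy⟩) := by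
            rintro x y hx hy (⟨a, b, ha, hb, hab⟩ | ⟨_, h2⟩)
            · have ha' : a = Sum.inl ⟨x, hx⟩ := hinj ha.symm
              have hb' : b = Sum.inl ⟨y, hy⟩ := hinj hb.symm
              rw [ha', hb'] at hab; exact hab
            · exact absurd (Sum.inl.inj h2) hy
          rcases hc with h | h | ⟨z, hz1, hz2⟩
          · exact Or.inl (arc u w hu hw h)
          · exact Or.inr (Or.inl (arc w u hw hu h))
          · refine Or.inr (Or.inr ?_)
            by_cases hzv : z = Sum.inl v
            · exfalso
              subst hzv
              have h1 : u = u₀ := hintov _ hz1 |> Sum.inl.inj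
              have h2 : w = u₀ := hintov _ hz2 |> Sum.inl.inj
              exact hne' (h1.trans h2.symm)
            · rcases hz1 with ⟨a, b, ha, hb, hab⟩ | ⟨_, h2⟩
              · rcases hz2 with ⟨a', b', ha', hb', hab'⟩ | ⟨_, h2'⟩
                · have : b' = b := hinj (hb'.symm.trans hb)
                  refine ⟨b, ?_, ?_⟩
                  · have ha2 : a = Sum.inl ⟨u, hu⟩ := hinj ha.symm
                    rw [← ha2]; exact hab
                  · have ha2' : a' = Sum.inl ⟨w, hw⟩ := hinj ha'.symm
                    rw [← ha2']; exact this ▸ hab'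
                · exact absurd h2' hzv
              · exact absurd h2 hzv
      intro u w
      by_cases hu : u = v
      · subst hu
        constructor
        · intro h
          have hwu0 : w = u₀ := huniq w h
          subst hwu0
          exact ⟨fun hh => hvu0 (Sum.inl.inj hh), Or.inr (Or.inl (Or.inr ⟨rfl, rfl⟩))⟩
        · rintro ⟨hne, hc⟩
          rcases hc with h | h | ⟨z, hz1, _⟩
          · exact absurd h (hvnoout _)
          · have : w = u₀ := Sum.inl.inj (hintov _ h)
            exact this ▸ hadj
          · exact absurd hz1 (hvnoout _)
      · by_cases hw : w = v
        · subst hw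
          rw [phyAdj_comm, G.adj_comm]
          constructor
          · intro h
            have huu0 : u = u₀ := huniq u h
            subst huu0
            exact ⟨fun hh => hvu0 (Sum.inl.inj hh), Or.inr (Or.inl (Or.inr ⟨rfl, rfl⟩))⟩
          · rintro ⟨hne, hc⟩
            rcases hc with h | h | ⟨z, hz1, _⟩
            · exact absurd h (hvnoout _)
            · have : u = u₀ := Sum.inl.inj (hintov _ h)
              exact this ▸ hadj
            · exact absurd hz1 (hvnoout _)
        · exact main u w hu hw
    · -- no arcs from extras into V
      rintro j u (⟨a, b, ha, hb, hab⟩ | ⟨h1, _⟩)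
      · rcases a with x | j'
        · exact absurd ha (by simp [he])
        · rcases b with ⟨y, hy⟩ | j''
          · exact hno j' ⟨y, hy⟩ hab
          · exact absurd hb (by simp [he])
      · exact Sum.inr_ne_inl h1
end

section
/- Let G be a graph, let xy be an edge of G not contained in any triangle of G, and let D be a phylogeny digraph for G. If (x,y) is an arc of D, then x is the only in-neighbor of y in D that belongs to V(G). -/
open SimpleGraph

theorem stmt11 {V : Type*} (G : SimpleGraph V) (x y : V) (hxy : G.Adj x y)
    (hnt : ∀ z, ¬ (G.Adj x z ∧ G.Adj y z)) (r : ℕ)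
    (D : (V ⊕ Fin r) → (V ⊕ Fin r) → Prop) (hD : IsPhyDigraphOn G r D)
    (harc : D (Sum.inl x) (Sum.inl y)) :
    ∀ z : V, D (Sum.inl z) (Sum.inl y) → z = x := by
  intro z hz
  by_contra hne
  obtain ⟨hacyc, hiff, _⟩ := hD
  have hzy : z ≠ y := by
    rintro rfl; exact hacyc _ (Relation.TransGen.single hz)
  have h1 : G.Adj x z := (hiff x z).2 ⟨by simpa [Ne, eq_comm] using hne,
    Or.inr (Or.inr ⟨Sum.inl y, harc, hz⟩)⟩
  have h2 : G.Adj y z := ((hiff z y).2 ⟨by simpa using hzy, Or.inl hz⟩).symm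
  exact hnt z ⟨h1, h2⟩
end

section
/- Let G be a graph, let xy be an edge of G not contained in any triangle of G, and let D be a phylogeny digraph for G. If z is a common out-neighbor of x and y in D, then z does not belong to V(G), and x and y are the only in-neighbors of z in D that belong to V(G). -/
open SimpleGraph

theorem stmt12 {V : Type*} (G : SimpleGraph V) (x y : V) (hxy : G.Adj x y)
    (hnt : ∀ z, ¬ (G.Adj x z ∧ G.Adj y z)) (r : ℕ)
    (D : (V ⊕ Fin r) → (V ⊕ Fin r) → Prop) (hD : IsPhyDigraphOn G r D)
    (z : V ⊕ Fin r) (hzx : D (Sum.inl x) z) (hzy : D (Sum.inl y) z) :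
    (∀ v : V, z ≠ Sum.inl v) ∧ (∀ w : V, D (Sum.inl w) z → w = x ∨ w = y) := by
  obtain ⟨hacyc, hadj, _⟩ := hD
  constructor
  · rintro v rfl
    have hxv : x ≠ v := by rintro rfl; exact hacyc _ (Relation.TransGen.single hzx)
    have hyv : y ≠ v := by rintro rfl; exact hacyc _ (Relation.TransGen.single hzy)
    exact hnt v ⟨(hadj x v).2 ⟨by simpa using hxv, Or.inl hzx⟩,
      (hadj y v).2 ⟨by simpa using hyv, Or.inl hzy⟩⟩
  · intro w hw
    by_contra h
    push_neg at h
    obtain ⟨hwx, hwy⟩ := h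
    have h1 : G.Adj x w := ((hadj x w).2 ⟨by simpa using (Ne.symm hwx),
      Or.inr (Or.inr ⟨z, hzx, hw⟩)⟩)
    have h2 : G.Adj y w := ((hadj y w).2 ⟨by simpa using (Ne.symm hwy),
      Or.inr (Or.inr ⟨z, hzy, hw⟩)⟩)
    exact hnt w ⟨h1, h2⟩
end

section
/- If G is a connected K_4-free graph with exactly t triangles and d diamonds such that all diamonds of G are mutually edge-disjoint, then the edge clique cover number of G satisfies θ_e(G) = |E(G)| − 2t + d. -/
open SimpleGraph

open Finset
open scoped Classical

section Dev
variable {V : Type*} [Fintype V] (G : SimpleGraph V)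

noncomputable def tris : Finset (Finset V) := univ.filter (G.IsNClique 3 ·)
noncomputable def edgs : Finset (Finset V) := univ.filter (G.IsNClique 2 ·)
noncomputable def dias : Finset (Finset V) := univ.filter (IsDiamondOn G ·)

variable {G}

lemma mem_tris {T : Finset V} : T ∈ tris G ↔ G.IsNClique 3 T := by
  simp [tris]

lemma mem_edgs {e : Finset V} : e ∈ edgs G ↔ G.IsNClique 2 e := by
  simp [edgs]

lemma mem_dias {S : Finset V} : S ∈ dias G ↔ IsDiamondOn G S := by
  simp [dias]

lemma pair_mem_edgs {u v : V} (h : G.Adj u v) : ({u,v} : Finset V) ∈ edgs G := by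
  rw [mem_edgs]
  constructor
  · intro a ha b hb hab
    simp only [coe_insert, Set.mem_insert_iff, coe_singleton, Set.mem_singleton_iff] at ha hb
    rcases ha with rfl|rfl <;> rcases hb with rfl|rfl <;> simp_all [h.symm]
  · rw [card_eq_two]; exact ⟨u, v, h.ne, rfl⟩

lemma edgs_elim {e : Finset V} (he : e ∈ edgs G) : ∃ u v, G.Adj u v ∧ e = {u,v} := by
  rw [mem_edgs] at he
  obtain ⟨u, v, huv, rfl⟩ := card_eq_two.1 he.2
  refine ⟨u, v, ?_, rfl⟩
  exact he.1 (by simp) (by simp) huv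


section Dev2
variable {V : Type*} [Fintype V] {G : SimpleGraph V}

-- clique size bound
lemma clique_card_le (hk4 : G.CliqueFree 4) {s : Set V} (hs : G.IsClique s)
    {t : Finset V} (ht : ↑t ⊆ s) : t.card ≤ 3 := by
  by_contra h
  push_neg at h
  obtain ⟨u, hu, hcard⟩ := Finset.exists_subset_card_eq h
  exact hk4 u ⟨hs.subset ((Finset.coe_subset.2 hu).trans ht), hcard⟩

-- common neighbors
noncomputable def cn (G : SimpleGraph V) (u v : V) : Finset V :=
  univ.filter (fun w => G.Adj u w ∧ G.Adj v w)

lemma mem_cn {u v w : V} : w ∈ cn G u v ↔ G.Adj u w ∧ G.Adj v w := by simp [cn]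

-- nonadjacency of two common neighbors
lemma cn_nonadj (hk4 : G.CliqueFree 4) {u v a b : V} (huv : G.Adj u v)
    (ha : a ∈ cn G u v) (hb : b ∈ cn G u v) (hab : a ≠ b) : ¬ G.Adj a b := by
  rw [mem_cn] at ha hb
  intro hadj
  refine hk4 {u, v, a, b} ⟨?_, ?_⟩
  · have h1 := huv.symm; have h2 := ha.1.symm; have h3 := ha.2.symm
    have h4 := hb.1.symm; have h5 := hb.2.symm; have h6 := hadj.symm
    have h7 := ha.1; have h8 := ha.2; have h9 := hb.1; have h10 := hb.2
    intro x hx y hy hxy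
    simp only [coe_insert, Set.mem_insert_iff, coe_singleton, Set.mem_singleton_iff] at hx hy
    rcases hx with rfl|rfl|rfl|rfl <;> rcases hy with rfl|rfl|rfl|rfl <;>
      first | exact absurd rfl hxy | assumption
  · have hvb : v ≠ b := G.ne_of_adj hb.2
    have hva : v ≠ a := G.ne_of_adj ha.2
    have hua : u ≠ a := G.ne_of_adj ha.1
    have hub : u ≠ b := G.ne_of_adj hb.1
    rw [card_insert_of_notMem (by simp [huv.ne, hua, hub]),
      card_insert_of_notMem (by simp [hva, hvb]),
      card_insert_of_notMem (by simp [hab]), card_singleton]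

-- the diamond built from an edge and two common neighbors
lemma diamond_of_two_cn (hk4 : G.CliqueFree 4) {u v a b : V} (huv : G.Adj u v)
    (ha : a ∈ cn G u v) (hb : b ∈ cn G u v) (hab : a ≠ b) :
    IsDiamondOn G ({u, v, a, b} : Finset V) := by
  have hnadj := cn_nonadj hk4 huv ha hb hab
  rw [mem_cn] at ha hb
  refine ⟨u, a, v, b, ?_, (G.ne_of_adj ha.1), huv.ne, (G.ne_of_adj hb.1),
    (G.ne_of_adj ha.2).symm, hab, G.ne_of_adj hb.2,
    ha.1, huv, hb.1, ha.2.symm, hb.2, hnadj⟩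
  ext x
  simp only [coe_insert, Set.mem_insert_iff, coe_singleton, Set.mem_singleton_iff]
  tauto

-- at most two common neighbors
lemma cn_card_le (hk4 : G.CliqueFree 4) (hdiam : EdgeDisjointDiamonds G)
    {u v : V} (huv : G.Adj u v) : (cn G u v).card ≤ 2 := by
  by_contra h
  push_neg at h
  obtain ⟨s, hs, hscard⟩ := Finset.exists_subset_card_eq (show 3 ≤ (cn G u v).card by omega)
  obtain ⟨a, b, c, hab, hac, hbc, rfl⟩ := Finset.card_eq_three.1 hscard
  have ha : a ∈ cn G u v := hs (by simp)
  have hb : b ∈ cn G u v := hs (by simp)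
  have hc : c ∈ cn G u v := hs (by simp)
  have D1 := diamond_of_two_cn hk4 huv ha hb hab
  have D2 := diamond_of_two_cn hk4 huv ha hc hac
  have hne : ({u,v,a,b} : Finset V) ≠ {u,v,a,c} := by
    intro hEq
    have hbm : b ∈ ({u,v,a,c} : Finset V) := hEq ▸ (by simp : b ∈ ({u,v,a,b} : Finset V))
    simp only [mem_insert, mem_singleton] at hbm
    rw [mem_cn] at hb
    rcases hbm with rfl|rfl|rfl|rfl
    · exact G.loopless.irrefl _ hb.1
    · exact G.loopless.irrefl _ hb.2
    · exact hab rfl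
    · exact hbc rfl
  exact hdiam _ _ D1 D2 hne u v huv (by simp) (by simp) (by simp) (by simp)

end Dev2


variable (G) in
noncomputable def tc (e : Finset V) : ℕ := ((tris G).filter (fun T => e ⊆ T)).card

lemma tc_pair {u v : V} (huv : G.Adj u v) : tc G {u,v} = (cn G u v).card := by
  symm
  apply Finset.card_bij (fun w _ => insert w {u,v})
  · intro w hw
    rw [mem_cn] at hw
    rw [mem_filter, mem_tris]
    constructor
    · rw [show (insert w {u,v} : Finset V) = {w,u,v} by rfl, is3Clique_triple_iff]
      exact ⟨hw.1.symm, hw.2.symm, huv⟩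
    · intro x hx; simp only [mem_insert, mem_singleton] at hx ⊢; tauto
  · intro a ha b hb hEq
    have hane : a ∉ ({u,v} : Finset V) := by
      rw [mem_cn] at ha
      simp [Ne.symm (G.ne_of_adj ha.1), Ne.symm (G.ne_of_adj ha.2)]
    have hbne : b ∉ ({u,v} : Finset V) := by
      rw [mem_cn] at hb
      simp [Ne.symm (G.ne_of_adj hb.1), Ne.symm (G.ne_of_adj hb.2)]
    have : a ∈ insert b ({u,v} : Finset V) := hEq ▸ mem_insert_self a {u,v}
    rcases mem_insert.1 this with h | h
    · exact h
    · exact absurd h hane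
  · intro T hT
    rw [mem_filter, mem_tris] at hT
    obtain ⟨hT3, hsub⟩ := hT
    have hcard : (T \ {u,v}).card = 1 := by
      rw [card_sdiff_of_subset hsub, hT3.2, card_insert_of_notMem (by simp [huv.ne]), card_singleton]
    obtain ⟨w, hw⟩ := card_eq_one.1 hcard
    have hwT : w ∈ T \ ({u,v} : Finset V) := hw ▸ mem_singleton_self w
    rw [mem_sdiff, mem_insert, mem_singleton] at hwT
    push_neg at hwT
    refine ⟨w, ?_, ?_⟩
    · rw [mem_cn]
      have hu : u ∈ T := hsub (by simp)
      have hv : v ∈ T := hsub (by simp)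
      exact ⟨hT3.1 (by simpa using hu) (by simpa using hwT.1) (Ne.symm hwT.2.1),
             hT3.1 (by simpa using hv) (by simpa using hwT.1) (Ne.symm hwT.2.2)⟩
    · apply Finset.eq_of_subset_of_card_le
      · intro x hx
        rcases mem_insert.1 hx with rfl | hx
        · exact hwT.1
        · exact hsub hx
      · rw [hT3.2, card_insert_of_notMem (by simp [hwT.2.1, hwT.2.2]),
          card_insert_of_notMem (by simp [huv.ne]), card_singleton]

lemma tc_le_two (hk4 : G.CliqueFree 4) (hdiam : EdgeDisjointDiamonds G)
    {e : Finset V} (he : e ∈ edgs G) : tc G e ≤ 2 := by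
  obtain ⟨u, v, huv, rfl⟩ := edgs_elim he
  rw [tc_pair huv]
  exact cn_card_le hk4 hdiam huv


lemma dia_elim {S : Finset V} (hS : IsDiamondOn G S) :
    ∃ x y z w : V, S = ({x,y,z,w} : Finset V) ∧
    x ≠ y ∧ x ≠ z ∧ x ≠ w ∧ y ≠ z ∧ y ≠ w ∧ z ≠ w ∧
    G.Adj x y ∧ G.Adj x z ∧ G.Adj x w ∧ G.Adj y z ∧ G.Adj z w ∧ ¬ G.Adj y w := by
  obtain ⟨x, y, z, w, hset, h⟩ := hS
  refine ⟨x, y, z, w, ?_, h⟩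
  apply Finset.coe_injective
  rw [hset]
  simp

variable (G) in
noncomputable def cne (e : Finset V) : Finset V :=
  univ.filter (fun w => ∀ x ∈ e, G.Adj x w)

lemma cne_pair {u v : V} : cne G {u,v} = cn G u v := by
  ext w
  simp only [cne, cn, mem_filter, mem_univ, true_and, mem_insert, mem_singleton]
  constructor
  · intro h; exact ⟨h u (Or.inl rfl), h v (Or.inr rfl)⟩
  · rintro ⟨h1, h2⟩ x (rfl | rfl) <;> assumption

lemma pair_eq_of_same_diamond {u v a b u' v' a' b' : V}
    (huv : G.Adj u v) (ha : a ∈ cn G u v) (hb : b ∈ cn G u v) (hnab : ¬G.Adj a b)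
    (huv' : G.Adj u' v') (ha' : a' ∈ cn G u' v') (hb' : b' ∈ cn G u' v')
    (hab' : a' ≠ b') (hnab' : ¬G.Adj a' b')
    (hS : ({u,v,a,b} : Finset V) = {u',v',a',b'}) : ({u',v'} : Finset V) = {u,v} := by
  rw [mem_cn] at ha hb ha' hb'
  have memS : ∀ t : V, t ∈ ({u,v,a,b} : Finset V) ↔ (t = u ∨ t = v ∨ t = a ∨ t = b) := by
    intro t; simp
  -- a' and b' lie in {a, b}
  have key : ∀ c d : V, ¬ G.Adj c d → c ≠ d →
      c ∈ ({u,v,a,b} : Finset V) → d ∈ ({u,v,a,b} : Finset V) → (c = a ∨ c = b) := by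
    intro c d hncd hcd hc hd
    rw [memS] at hc hd
    rcases hc with rfl | rfl | rfl | rfl
    · rcases hd with rfl | rfl | rfl | rfl
      · exact absurd rfl hcd
      · exact absurd huv hncd
      · exact absurd ha.1 hncd
      · exact absurd hb.1 hncd
    · rcases hd with rfl | rfl | rfl | rfl
      · exact absurd huv.symm hncd
      · exact absurd rfl hcd
      · exact absurd ha.2 hncd
      · exact absurd hb.2 hncd
    · left; rfl
    · right; rfl
  have ha'S : a' ∈ ({u,v,a,b} : Finset V) := by rw [hS]; simp
  have hb'S : b' ∈ ({u,v,a,b} : Finset V) := by rw [hS]; simp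
  have ha'ab : a' = a ∨ a' = b := key a' b' hnab' hab' ha'S hb'S
  have hb'ab : b' = a ∨ b' = b := key b' a' (fun h => hnab' h.symm) hab'.symm hb'S ha'S
  -- u' and v' are not in {a, b}
  have hu'S : u' ∈ ({u,v,a,b} : Finset V) := by rw [hS]; simp
  have hv'S : v' ∈ ({u,v,a,b} : Finset V) := by rw [hS]; simp
  have notab : ∀ c : V, G.Adj c a' → G.Adj c b' → c ≠ a ∧ c ≠ b := by
    intro c hca hcb
    constructor
    · rintro rfl
      rcases ha'ab with rfl | rfl
      · exact G.loopless.irrefl _ hca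
      · exact hnab hca
    · rintro rfl
      rcases hb'ab with rfl | rfl
      · exact hnab hcb.symm
      · exact G.loopless.irrefl _ hcb
  have hu'ne := notab u' ha'.1 hb'.1
  have hv'ne := notab v' ha'.2 hb'.2
  have hu'uv : u' = u ∨ u' = v := by
    rw [memS] at hu'S; rcases hu'S with h|h|h|h
    · exact Or.inl h
    · exact Or.inr h
    · exact absurd h hu'ne.1
    · exact absurd h hu'ne.2
  have hv'uv : v' = u ∨ v' = v := by
    rw [memS] at hv'S; rcases hv'S with h|h|h|h
    · exact Or.inl h
    · exact Or.inr h
    · exact absurd h hv'ne.1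
    · exact absurd h hv'ne.2
  have huv'ne : u' ≠ v' := huv'.ne
  rcases hu'uv with rfl | rfl <;> rcases hv'uv with rfl | rfl
  · exact absurd rfl huv'ne
  · rfl
  · exact Finset.pair_comm u' v' ▸ rfl
  · exact absurd rfl huv'ne


variable (G) in
noncomputable def E2 : Finset (Finset V) := (edgs G).filter (fun e => tc G e = 2)

lemma f_pair_eq {u v a b : V} (hcn : cn G u v = {a, b}) :
    ({u,v} : Finset V) ∪ cne G {u,v} = {u,v,a,b} := by
  rw [cne_pair, hcn]
  ext x; simp only [mem_union, mem_insert, mem_singleton]; tauto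

lemma unpack_E2 {e : Finset V} (he : e ∈ E2 G) :
    ∃ u v a b : V, e = ({u,v} : Finset V) ∧ G.Adj u v ∧ a ≠ b ∧ cn G u v = {a,b} ∧
      a ∈ cn G u v ∧ b ∈ cn G u v := by
  rw [E2, mem_filter] at he
  obtain ⟨u, v, huv, rfl⟩ := edgs_elim he.1
  have h2 : (cn G u v).card = 2 := by rw [← tc_pair huv]; exact he.2
  obtain ⟨a, b, hab, hcn⟩ := card_eq_two.1 h2
  exact ⟨u, v, a, b, rfl, huv, hab, hcn, hcn ▸ by simp, hcn ▸ by simp⟩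

lemma card_E2 (hk4 : G.CliqueFree 4) (hdiam : EdgeDisjointDiamonds G) :
    (E2 G).card = (dias G).card := by
  apply Finset.card_bij (fun e _ => e ∪ cne G e)
  · intro e he
    obtain ⟨u, v, a, b, rfl, huv, hab, hcn, ha, hb⟩ := unpack_E2 he
    rw [f_pair_eq hcn, mem_dias]
    exact diamond_of_two_cn hk4 huv ha hb hab
  · intro e he e' he' hEq
    obtain ⟨u, v, a, b, rfl, huv, hab, hcn, ha, hb⟩ := unpack_E2 he
    obtain ⟨u', v', a', b', rfl, huv', hab', hcn', ha', hb'⟩ := unpack_E2 he'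
    rw [f_pair_eq hcn, f_pair_eq hcn'] at hEq
    exact (pair_eq_of_same_diamond huv ha hb (cn_nonadj hk4 huv ha hb hab)
      huv' ha' hb' hab' (cn_nonadj hk4 huv' ha' hb' hab') hEq).symm
  · intro S hS
    obtain ⟨x, y, z, w, rfl, hxy, hxz, hxw, hyz, hyw, hzw, axy, axz, axw, ayz, azw, nyw⟩ :=
      dia_elim (mem_dias.1 hS)
    have hymem : y ∈ cn G x z := mem_cn.2 ⟨axy, ayz.symm⟩
    have hwmem : w ∈ cn G x z := mem_cn.2 ⟨axw, azw⟩
    have hcn : cn G x z = {y, w} := by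
      symm
      apply Finset.eq_of_subset_of_card_le
      · intro t ht
        rcases mem_insert.1 ht with rfl | ht
        · exact hymem
        · rw [mem_singleton] at ht; exact ht ▸ hwmem
      · calc (cn G x z).card ≤ 2 := cn_card_le hk4 hdiam axz
          _ = ({y,w} : Finset V).card := by rw [card_insert_of_notMem (by simp [hyw]), card_singleton]
    refine ⟨{x, z}, ?_, ?_⟩
    · rw [E2, mem_filter]
      refine ⟨pair_mem_edgs axz, ?_⟩
      rw [tc_pair axz, hcn, card_insert_of_notMem (by simp [hyw]), card_singleton]
    · rw [f_pair_eq hcn]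
      ext t; simp only [mem_insert, mem_singleton]; tauto

lemma edges_in_tri {T : Finset V} (hT : G.IsNClique 3 T) :
    (edgs G).filter (fun e => e ⊆ T) = T.powersetCard 2 := by
  ext e
  rw [mem_filter, mem_edgs, mem_powersetCard]
  constructor
  · rintro ⟨h1, h2⟩; exact ⟨h2, h1.2⟩
  · rintro ⟨h1, h2⟩
    exact ⟨⟨hT.1.subset (coe_subset.2 h1), h2⟩, h1⟩

lemma sum_tc : ∑ e ∈ edgs G, tc G e = 3 * (tris G).card := by
  have : ∀ e ∈ edgs G, tc G e = ∑ T ∈ tris G, if e ⊆ T then 1 else 0 := by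
    intro e _
    rw [tc, Finset.card_filter]
  rw [Finset.sum_congr rfl this, Finset.sum_comm]
  have : ∀ T ∈ tris G, (∑ e ∈ edgs G, if e ⊆ T then 1 else 0) = 3 := by
    intro T hT
    rw [← Finset.card_filter, edges_in_tri (mem_tris.1 hT), card_powersetCard,
      (mem_tris.1 hT).2]
    decide
  rw [Finset.sum_congr rfl this, Finset.sum_const, smul_eq_mul, mul_comm]


lemma key1 (hk4 : G.CliqueFree 4) (hdiam : EdgeDisjointDiamonds G) :
    (edgs G).card + (dias G).card
      = ((edgs G).filter (fun e => tc G e = 0)).card + 3 * (tris G).card := by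
  classical
  have hmaps : ∀ e ∈ edgs G, tc G e ∈ Finset.range 3 := by
    intro e he
    rw [Finset.mem_range]
    exact Nat.lt_succ_of_le (tc_le_two hk4 hdiam he)
  have hm : (edgs G).card
      = ∑ k ∈ Finset.range 3, ((edgs G).filter (fun e => tc G e = k)).card :=
    Finset.card_eq_sum_card_fiberwise hmaps
  have hsum : ∑ k ∈ Finset.range 3, ∑ e ∈ (edgs G).filter (fun e => tc G e = k), tc G e
      = ∑ e ∈ edgs G, tc G e := Finset.sum_fiberwise_of_maps_to hmaps _
  have hinner : ∀ k, ∑ e ∈ (edgs G).filter (fun e => tc G e = k), tc G e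
      = k * ((edgs G).filter (fun e => tc G e = k)).card := by
    intro k
    rw [Finset.sum_congr rfl (fun e he => (Finset.mem_filter.1 he).2),
      Finset.sum_const, smul_eq_mul, mul_comm]
  rw [Finset.sum_congr rfl (fun k _ => hinner k)] at hsum
  rw [sum_tc] at hsum
  have hE2 : ((edgs G).filter (fun e => tc G e = 2)).card = (dias G).card :=
    card_E2 hk4 hdiam
  rw [show (3 : ℕ) = 2 + 1 by rfl, Finset.sum_range_succ, Finset.sum_range_succ,
    Finset.sum_range_one] at hsum hm
  rw [hE2] at hsum hm
  omega


lemma cover_mem :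
    ((edgs G).filter (fun e => tc G e = 0) ∪ tris G).card
      ∈ {n | ∃ F : Fin n → Set V, (∀ i, G.IsClique (F i)) ∧
        ∀ u v, G.Adj u v → ∃ i, u ∈ F i ∧ v ∈ F i} := by
  classical
  set C : Finset (Finset V) := (edgs G).filter (fun e => tc G e = 0) ∪ tris G with hC
  refine ⟨fun i => ((C.equivFin.symm i : C) : Finset V), ?_, ?_⟩
  · intro i
    have hmem : ((C.equivFin.symm i : C) : Finset V) ∈ C := (C.equivFin.symm i).2
    rcases Finset.mem_union.1 hmem with h | h
    · exact ((mem_edgs.1 (Finset.mem_filter.1 h).1)).1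
    · exact (mem_tris.1 h).1
  · intro u v huv
    by_cases h0 : tc G {u, v} = 0
    · have hmem : ({u,v} : Finset V) ∈ C :=
        Finset.mem_union_left _ (Finset.mem_filter.2 ⟨pair_mem_edgs huv, h0⟩)
      refine ⟨C.equivFin ⟨{u,v}, hmem⟩, ?_⟩
      simp only [Equiv.symm_apply_apply]
      simp
    · have hpos : 0 < ((tris G).filter (fun T => ({u,v} : Finset V) ⊆ T)).card :=
        Nat.pos_of_ne_zero h0
      obtain ⟨T, hT⟩ := Finset.card_pos.1 hpos
      rw [Finset.mem_filter] at hT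
      have hmem : T ∈ C := Finset.mem_union_right _ hT.1
      refine ⟨C.equivFin ⟨T, hmem⟩, ?_⟩
      simp only [Equiv.symm_apply_apply]
      have hu : u ∈ T := hT.2 (by simp)
      have hv : v ∈ T := hT.2 (by simp)
      exact ⟨by simpa using hu, by simpa using hv⟩

lemma upper : edgeCliqueCoverNumber G
    ≤ ((edgs G).filter (fun e => tc G e = 0)).card + (tris G).card :=
  le_trans (Nat.sInf_le cover_mem) (Finset.card_union_le _ _)


section Lower
variable {n : ℕ}

variable (G) in
noncomputable def fib (φ : Finset V → Fin n) (i : Fin n) : Finset (Finset V) :=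
  (edgs G).filter (fun e => φ e = i)

variable (G) in
noncomputable def tau (φ : Finset V → Fin n) (i : Fin n) : Finset V :=
  (fib G φ i).sup id

lemma e_subset_tau {φ : Finset V → Fin n} {i : Fin n} {e : Finset V}
    (he : e ∈ fib G φ i) : e ⊆ tau G φ i :=
  Finset.le_sup (f := id) he

lemma tau_subset_F {F : Fin n → Set V} {φ : Finset V → Fin n}
    (hφ : ∀ e ∈ edgs G, ∀ x ∈ e, x ∈ F (φ e)) {i : Fin n} :
    ↑(tau G φ i) ⊆ F i := by
  intro x hx
  simp only [Finset.mem_coe, tau, Finset.mem_sup, id] at hx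
  obtain ⟨e, he, hxe⟩ := hx
  rw [fib, Finset.mem_filter] at he
  have := hφ e he.1 x hxe
  rwa [he.2] at this

lemma inter_card_le_one {e e' : Finset V} (he : e ∈ edgs G) (he' : e' ∈ edgs G)
    (hne : e ≠ e') : (e ∩ e').card ≤ 1 := by
  by_contra h
  push_neg at h
  have h1 : e ∩ e' = e := Finset.eq_of_subset_of_card_le (Finset.inter_subset_left)
    (by rw [(mem_edgs.1 he).2]; omega)
  have h2 : e ∩ e' = e' := Finset.eq_of_subset_of_card_le (Finset.inter_subset_right)
    (by rw [(mem_edgs.1 he').2]; omega)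
  exact hne (h1 ▸ h2)

lemma tau_tris (hk4 : G.CliqueFree 4) {F : Fin n → Set V} {φ : Finset V → Fin n}
    (hcl : ∀ i, G.IsClique (F i)) (hφ : ∀ e ∈ edgs G, ∀ x ∈ e, x ∈ F (φ e))
    {i : Fin n} (hc : 2 ≤ (fib G φ i).card) : tau G φ i ∈ tris G := by
  have hsub : ↑(tau G φ i) ⊆ F i := tau_subset_F hφ
  have hle : (tau G φ i).card ≤ 3 := clique_card_le hk4 (hcl i) hsub
  have hge : 3 ≤ (tau G φ i).card := by
    obtain ⟨e, he, e', he', hne⟩ := Finset.one_lt_card.1 hc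
    have h1 : e ∈ edgs G := (Finset.mem_filter.1 he).1
    have h2 : e' ∈ edgs G := (Finset.mem_filter.1 he').1
    have hunion : e ∪ e' ⊆ tau G φ i :=
      Finset.union_subset (e_subset_tau he) (e_subset_tau he')
    have hint := inter_card_le_one h1 h2 hne
    have hcards : (e ∪ e').card + (e ∩ e').card = e.card + e'.card :=
      Finset.card_union_add_card_inter e e'
    have := Finset.card_le_card hunion
    rw [(mem_edgs.1 h1).2, (mem_edgs.1 h2).2] at hcards
    omega
  rw [mem_tris]
  exact ⟨(hcl i).subset hsub, le_antisymm hle hge⟩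

lemma fib_subset_powerset {φ : Finset V → Fin n} {i : Fin n} :
    fib G φ i ⊆ (tau G φ i).powersetCard 2 := by
  intro e he
  rw [Finset.mem_powersetCard]
  exact ⟨e_subset_tau he, (mem_edgs.1 (Finset.mem_filter.1 he).1).2⟩

lemma c_le_three {φ : Finset V → Fin n} {i : Fin n}
    (htau : tau G φ i ∈ tris G) : (fib G φ i).card ≤ 3 := by
  calc (fib G φ i).card ≤ ((tau G φ i).powersetCard 2).card :=
        Finset.card_le_card fib_subset_powerset
    _ = 3 := by rw [card_powersetCard, (mem_tris.1 htau).2]; decide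

lemma sum_c_le {φ : Finset V → Fin n} {J : Finset (Fin n)} {B : Finset (Finset V)}
    (h : ∀ i ∈ J, fib G φ i ⊆ B) : ∑ i ∈ J, (fib G φ i).card ≤ B.card := by
  rw [← Finset.card_biUnion]
  · apply Finset.card_le_card
    intro e he
    obtain ⟨i, hi, hei⟩ := Finset.mem_biUnion.1 he
    exact h i hi hei
  · intro i _ j _ hij
    rw [Function.onFun, Finset.disjoint_left]
    intro e he1 he2
    rw [fib, Finset.mem_filter] at he1 he2
    exact hij (he1.2 ▸ he2.2 ▸ rfl)


-- sum with -1: ∑ (c i - 1) + |J| = ∑ c i  when all c i ≥ 1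
lemma sum_sub_one {J : Finset (Fin n)} {c : Fin n → ℕ} (h : ∀ i ∈ J, 1 ≤ c i) :
    ∑ i ∈ J, (c i - 1) + J.card = ∑ i ∈ J, c i := by
  have h2 : ∑ i ∈ J, (c i - 1) + J.card = ∑ i ∈ J, ((c i - 1) + 1) := by
    rw [Finset.sum_add_distrib, Finset.sum_const, smul_eq_mul, mul_one]
  rw [h2]
  exact Finset.sum_congr rfl (fun i hi => by have := h i hi; omega)

lemma bound_T (hk4 : G.CliqueFree 4) {F : Fin n → Set V} {φ : Finset V → Fin n}
    (hcl : ∀ i, G.IsClique (F i)) (hφ : ∀ e ∈ edgs G, ∀ x ∈ e, x ∈ F (φ e))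
    {T : Finset V} (hT : T ∈ tris G) {J : Finset (Fin n)}
    (hJ : ∀ i ∈ J, 2 ≤ (fib G φ i).card ∧ tau G φ i = T) :
    ∑ i ∈ J, ((fib G φ i).card - 1) ≤ 2 := by
  rcases Finset.eq_empty_or_nonempty J with rfl | hne
  · simp
  · have hsum : ∑ i ∈ J, (fib G φ i).card ≤ 3 := by
      have h3 : ((T.powersetCard 2)).card = 3 := by
        rw [card_powersetCard, (mem_tris.1 hT).2]; decide
      rw [← h3]
      apply sum_c_le
      intro i hi
      have := (hJ i hi).2
      exact this ▸ fib_subset_powerset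
    have hx := sum_sub_one (J := J) (c := fun i => (fib G φ i).card)
      (fun i hi => le_trans (by norm_num) (hJ i hi).1)
    have hcard : 1 ≤ J.card := Finset.card_pos.2 hne
    omega

lemma pair_finset_eq {a b c d : V} (h : ({a,b} : Finset V) = {c,d}) (hab : a ≠ b) :
    (a = c ∧ b = d) ∨ (a = d ∧ b = c) := by
  have ha : a ∈ ({c,d} : Finset V) := h ▸ (by simp)
  have hb : b ∈ ({c,d} : Finset V) := h ▸ (by simp)
  have hc : c ∈ ({a,b} : Finset V) := h ▸ (by simp)
  have hd : d ∈ ({a,b} : Finset V) := h ▸ (by simp)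
  simp only [mem_insert, mem_singleton] at ha hb hc hd
  rcases ha with rfl | rfl
  · left
    refine ⟨rfl, ?_⟩
    rcases hb with h2 | h2
    · exact absurd h2.symm hab
    · exact h2
  · right
    refine ⟨rfl, ?_⟩
    rcases hb with h2 | h2
    · exact h2
    · exact absurd h2.symm hab

lemma edges_in_dia_le (hS : IsDiamondOn G S) :
    ((edgs G).filter (fun e => e ⊆ S)).card ≤ 5 := by
  obtain ⟨x, y, z, w, rfl, hxy, hxz, hxw, hyz, hyw, hzw, axy, axz, axw, ayz, azw, nyw⟩ :=
    dia_elim hS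
  have hScard : ({x,y,z,w} : Finset V).card = 4 := by
    rw [card_insert_of_notMem (by simp [hxy, hxz, hxw]),
      card_insert_of_notMem (by simp [hyz, hyw]),
      card_insert_of_notMem (by simp [hzw]), card_singleton]
  have hmem : ({y, w} : Finset V) ∈ ({x,y,z,w} : Finset V).powersetCard 2 := by
    rw [Finset.mem_powersetCard]
    constructor
    · intro t ht; rcases mem_insert.1 ht with rfl | ht <;> simp_all
    · rw [card_insert_of_notMem (by simp [hyw]), card_singleton]
  calc ((edgs G).filter (fun e => e ⊆ ({x,y,z,w} : Finset V))).card
      ≤ ((({x,y,z,w} : Finset V).powersetCard 2).erase {y, w}).card := by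
        apply Finset.card_le_card
        intro e he
        rw [Finset.mem_filter] at he
        rw [Finset.mem_erase]
        constructor
        · intro hEq
          obtain ⟨c, d, hcd, rfl⟩ := edgs_elim he.1
          rcases pair_finset_eq hEq hcd.ne with ⟨rfl, rfl⟩ | ⟨rfl, rfl⟩
          · exact nyw hcd
          · exact nyw hcd.symm
        · rw [Finset.mem_powersetCard]
          exact ⟨he.2, (mem_edgs.1 he.1).2⟩
    _ = 5 := by
        rw [Finset.card_erase_of_mem hmem, card_powersetCard, hScard]
        decide

lemma bound_S (hk4 : G.CliqueFree 4) {F : Fin n → Set V} {φ : Finset V → Fin n}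
    (hcl : ∀ i, G.IsClique (F i)) (hφ : ∀ e ∈ edgs G, ∀ x ∈ e, x ∈ F (φ e))
    {S : Finset V} (hS : IsDiamondOn G S) {J : Finset (Fin n)}
    (hJ : ∀ i ∈ J, 2 ≤ (fib G φ i).card ∧ tau G φ i ⊆ S) :
    ∑ i ∈ J, ((fib G φ i).card - 1) ≤ 3 := by
  have hsum5 : ∑ i ∈ J, (fib G φ i).card ≤ 5 := by
    calc ∑ i ∈ J, (fib G φ i).card ≤ ((edgs G).filter (fun e => e ⊆ S)).card := by
          apply sum_c_le
          intro i hi e he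
          rw [Finset.mem_filter]
          exact ⟨(Finset.mem_filter.1 he).1, (e_subset_tau he).trans (hJ i hi).2⟩
      _ ≤ 5 := edges_in_dia_le hS
  have h3 : ∀ i ∈ J, (fib G φ i).card ≤ 3 := fun i hi =>
    c_le_three (tau_tris hk4 hcl hφ (hJ i hi).1)
  have hx := sum_sub_one (J := J) (c := fun i => (fib G φ i).card)
    (fun i hi => le_trans (by norm_num) (hJ i hi).1)
  rcases Nat.lt_or_ge J.card 2 with hcard | hcard
  · by_cases h0 : J.card = 0
    · rw [Finset.card_eq_zero.1 h0]; simp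
    · have h1 : J.card = 1 := by omega
      obtain ⟨i, rfl⟩ := Finset.card_eq_one.1 h1
      rw [Finset.sum_singleton]
      have := h3 i (Finset.mem_singleton_self i)
      omega
  · omega

end Lower


lemma tri_has_edge {T : Finset V} (hT : T ∈ tris G) :
    ∃ u v, u ≠ v ∧ G.Adj u v ∧ u ∈ T ∧ v ∈ T := by
  obtain ⟨a, b, c, hab, hac, hbc, rfl⟩ := Finset.card_eq_three.1 (mem_tris.1 hT).2
  exact ⟨a, b, hab, (mem_tris.1 hT).1 (by simp) (by simp) hab, by simp, by simp⟩

lemma tri_unique_dia (hdiam : EdgeDisjointDiamonds G) {T S S' : Finset V}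
    (hT : T ∈ tris G) (hS : S ∈ dias G) (hS' : S' ∈ dias G)
    (h1 : T ⊆ S) (h2 : T ⊆ S') : S = S' := by
  by_contra hne
  obtain ⟨u, v, huv2, huv, hu, hv⟩ := tri_has_edge hT
  exact hdiam S S' (mem_dias.1 hS) (mem_dias.1 hS') hne u v huv
    (h1 hu) (h1 hv) (h2 hu) (h2 hv)

lemma sdiff_eq_of_card {T S : Finset V} (hsub : T ⊆ S) {c : V}
    (hc : S \ T = {c}) : T = S.erase c := by
  ext t
  rw [Finset.mem_erase]
  constructor
  · intro ht
    refine ⟨?_, hsub ht⟩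
    rintro rfl
    have : t ∈ S \ T := hc ▸ Finset.mem_singleton_self t
    exact (Finset.mem_sdiff.1 this).2 ht
  · rintro ⟨htc, htS⟩
    by_contra hT
    have : t ∈ S \ T := Finset.mem_sdiff.2 ⟨htS, hT⟩
    rw [hc, Finset.mem_singleton] at this
    exact htc this

lemma tris_in_dia (hdiam : EdgeDisjointDiamonds G) {S : Finset V} (hS : S ∈ dias G) :
    ((tris G).filter (fun T => T ⊆ S)).card = 2 := by
  obtain ⟨x, y, z, w, rfl, hxy, hxz, hxw, hyz, hyw, hzw, axy, axz, axw, ayz, azw, nyw⟩ :=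
    dia_elim (mem_dias.1 hS)
  have hScard : ({x,y,z,w} : Finset V).card = 4 := by
    rw [card_insert_of_notMem (by simp [hxy, hxz, hxw]),
      card_insert_of_notMem (by simp [hyz, hyw]),
      card_insert_of_notMem (by simp [hzw]), card_singleton]
  have hfe : (tris G).filter (fun T => T ⊆ ({x,y,z,w} : Finset V))
      = {({x,y,z} : Finset V), ({x,z,w} : Finset V)} := by
    ext T
    rw [Finset.mem_filter, Finset.mem_insert, Finset.mem_singleton]
    constructor
    · rintro ⟨hT, hsub⟩
      have hTcard := (mem_tris.1 hT).2
      have hsd : (({x,y,z,w} : Finset V) \ T).card = 1 := by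
        rw [Finset.card_sdiff_of_subset hsub, hScard, hTcard]
      obtain ⟨c, hc⟩ := Finset.card_eq_one.1 hsd
      have hTe : T = ({x,y,z,w} : Finset V).erase c := sdiff_eq_of_card hsub hc
      have hcS : c ∈ ({x,y,z,w} : Finset V) := by
        have : c ∈ ({x,y,z,w} : Finset V) \ T := hc ▸ Finset.mem_singleton_self c
        exact (Finset.mem_sdiff.1 this).1
      simp only [mem_insert, mem_singleton] at hcS
      have hclique := (mem_tris.1 hT).1
      rcases hcS with rfl | rfl | rfl | rfl
      · -- T = {y,z,w} : contains y and w adjacent: contradiction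
        exfalso
        have hy : y ∈ T := by
          rw [hTe, Finset.mem_erase]
          exact ⟨Ne.symm hxy, by simp⟩
        have hw : w ∈ T := by
          rw [hTe, Finset.mem_erase]
          exact ⟨Ne.symm hxw, by simp⟩
        exact nyw (hclique (by simpa using hy) (by simpa using hw) hyw)
      · -- c = y : T = {x,z,w}
        right
        rw [hTe]
        ext t
        rw [Finset.mem_erase]
        simp only [mem_insert, mem_singleton]
        constructor
        · rintro ⟨hty, h | h | h | h⟩ <;> tauto
        · rintro (rfl | rfl | rfl) <;> exact ⟨by tauto, by tauto⟩
      · -- c = z : T = {x,y,w} contains y, w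
        exfalso
        have hy : y ∈ T := by
          rw [hTe, Finset.mem_erase]
          exact ⟨hyz, by simp⟩
        have hw : w ∈ T := by
          rw [hTe, Finset.mem_erase]
          exact ⟨Ne.symm hzw, by simp⟩
        exact nyw (hclique (by simpa using hy) (by simpa using hw) hyw)
      · -- c = w : T = {x,y,z}
        left
        rw [hTe]
        ext t
        rw [Finset.mem_erase]
        simp only [mem_insert, mem_singleton]
        constructor
        · rintro ⟨htw, h | h | h | h⟩ <;> tauto
        · rintro (rfl | rfl | rfl) <;> exact ⟨by tauto, by tauto⟩
    · rintro (rfl | rfl)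
      · refine ⟨mem_tris.2 ?_, ?_⟩
        · rw [is3Clique_triple_iff]
          exact ⟨axy, axz, ayz⟩
        · intro t ht; simp only [mem_insert, mem_singleton] at ht ⊢; tauto
      · refine ⟨mem_tris.2 ?_, ?_⟩
        · rw [is3Clique_triple_iff]
          exact ⟨axz, axw, azw⟩
        · intro t ht; simp only [mem_insert, mem_singleton] at ht ⊢; tauto
  rw [hfe, card_insert_of_notMem, card_singleton]
  rw [Finset.mem_singleton]
  intro hEq
  have : y ∈ ({x,z,w} : Finset V) := hEq ▸ (by simp : y ∈ ({x,y,z} : Finset V))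
  simp only [mem_insert, mem_singleton] at this
  tauto


lemma lower_main (hk4 : G.CliqueFree 4) (hdiam : EdgeDisjointDiamonds G) {n : ℕ}
    (F : Fin n → Set V) (hcl : ∀ i, G.IsClique (F i))
    (hcov : ∀ u v, G.Adj u v → ∃ i, u ∈ F i ∧ v ∈ F i) :
    (edgs G).card + (dias G).card ≤ n + 2 * (tris G).card := by
  classical
  by_cases hE : edgs G = ∅
  · have ht : tris G = ∅ := by
      rw [Finset.eq_empty_iff_forall_notMem]
      intro T hT
      obtain ⟨u, v, _, huv, _, _⟩ := tri_has_edge hT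
      exact Finset.eq_empty_iff_forall_notMem.1 hE _ (pair_mem_edgs huv)
    have hd : dias G = ∅ := by
      rw [Finset.eq_empty_iff_forall_notMem]
      intro S hSd
      obtain ⟨x, y, z, w, rfl, _, _, _, _, _, _, axy, _⟩ := dia_elim (mem_dias.1 hSd)
      exact Finset.eq_empty_iff_forall_notMem.1 hE _ (pair_mem_edgs axy)
    rw [hE, ht, hd]
    simp
  · obtain ⟨e0, he0⟩ := Finset.nonempty_of_ne_empty hE
    obtain ⟨u0, v0, huv0, he0eq⟩ := edgs_elim he0
    obtain ⟨i0, -, -⟩ := hcov u0 v0 huv0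
    haveI : Nonempty (Fin n) := ⟨i0⟩
    have hex : ∀ e, e ∈ edgs G → ∃ i : Fin n, ∀ x ∈ e, x ∈ F i := by
      intro e he
      obtain ⟨u, v, huv, rfl⟩ := edgs_elim he
      obtain ⟨i, hu, hv⟩ := hcov u v huv
      refine ⟨i, fun x hx => ?_⟩
      rcases Finset.mem_insert.1 hx with rfl | hx
      · exact hu
      · rw [Finset.mem_singleton] at hx; exact hx ▸ hv
    set φ : Finset V → Fin n :=
      fun e => if h : ∃ i : Fin n, ∀ x ∈ e, x ∈ F i then h.choose else Classical.arbitrary _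
      with hφdef
    have hφ : ∀ e ∈ edgs G, ∀ x ∈ e, x ∈ F (φ e) := by
      intro e he
      have h := hex e he
      rw [hφdef]
      simp only [dif_pos h]
      exact h.choose_spec
    have hm : (edgs G).card = ∑ i : Fin n, (fib G φ i).card :=
      Finset.card_eq_sum_card_fiberwise (fun e _ => Finset.mem_univ _)
    set I : Finset (Fin n) := Finset.univ.filter (fun i => 2 ≤ (fib G φ i).card) with hI
    set Stot : ℕ := ∑ i ∈ I, ((fib G φ i).card - 1) with hStot
    have hmn : (edgs G).card ≤ n + Stot := by
      have h1 : ∑ i : Fin n, (fib G φ i).card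
          ≤ ∑ i : Fin n, (1 + ((fib G φ i).card - 1)) :=
        Finset.sum_le_sum fun i _ => by omega
      rw [Finset.sum_add_distrib, Finset.sum_const, Finset.card_univ, Fintype.card_fin,
        smul_eq_mul, mul_one] at h1
      have h2 : ∑ i : Fin n, ((fib G φ i).card - 1) = Stot := by
        rw [hStot]
        symm
        apply Finset.sum_subset (Finset.filter_subset _ _)
        intro i _ hiI
        simp only [hI, Finset.mem_filter, Finset.mem_univ, true_and, not_le] at hiI
        omega
      omega
    have htauI : ∀ i ∈ I, tau G φ i ∈ tris G := by
      intro i hi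
      exact tau_tris hk4 hcl hφ (Finset.mem_filter.1 hi).2
    have hgroup : Stot = ∑ T ∈ tris G,
        ∑ i ∈ I.filter (fun i => tau G φ i = T), ((fib G φ i).card - 1) :=
      (Finset.sum_fiberwise_of_maps_to htauI _).symm
    set P : Finset (Finset V) := (tris G).filter (fun T => ∃ S ∈ dias G, T ⊆ S) with hP
    have hPbi : P = (dias G).biUnion (fun S => (tris G).filter (fun T => T ⊆ S)) := by
      ext T
      rw [hP, Finset.mem_filter, Finset.mem_biUnion]
      constructor
      · rintro ⟨h1, S, h2, h3⟩
        exact ⟨S, h2, Finset.mem_filter.2 ⟨h1, h3⟩⟩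
      · rintro ⟨S, h2, h3⟩
        rw [Finset.mem_filter] at h3
        exact ⟨h3.1, S, h2, h3.2⟩
    have hdisj : ∀ S ∈ dias G, ∀ S' ∈ dias G, S ≠ S' →
        Disjoint ((tris G).filter (fun T => T ⊆ S)) ((tris G).filter (fun T => T ⊆ S')) := by
      intro S hS S' hS' hne
      rw [Finset.disjoint_left]
      intro T h1 h2
      rw [Finset.mem_filter] at h1 h2
      exact hne (tri_unique_dia hdiam h1.1 hS hS' h1.2 h2.2)
    have hPcard : P.card = 2 * (dias G).card := by
      rw [hPbi, Finset.card_biUnion hdisj]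
      rw [Finset.sum_congr rfl (fun S hS => tris_in_dia hdiam hS), Finset.sum_const,
        smul_eq_mul, mul_comm]
    have hPsub : P ⊆ tris G := Finset.filter_subset _ _
    have hsplit : ∑ T ∈ tris G \ P,
          (∑ i ∈ I.filter (fun i => tau G φ i = T), ((fib G φ i).card - 1))
        + ∑ T ∈ P, (∑ i ∈ I.filter (fun i => tau G φ i = T), ((fib G φ i).card - 1))
        = Stot := by
      rw [hgroup]
      exact Finset.sum_sdiff hPsub
    have hfree : ∑ T ∈ tris G \ P,
        (∑ i ∈ I.filter (fun i => tau G φ i = T), ((fib G φ i).card - 1))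
        ≤ 2 * (tris G \ P).card := by
      rw [mul_comm, ← smul_eq_mul, ← Finset.sum_const]
      apply Finset.sum_le_sum
      intro T hT
      apply bound_T hk4 hcl hφ (Finset.mem_sdiff.1 hT).1
      intro i hi
      simp only [hI, Finset.mem_filter, Finset.mem_univ, true_and] at hi
      exact hi
    have hpaired : ∑ T ∈ P,
        (∑ i ∈ I.filter (fun i => tau G φ i = T), ((fib G φ i).card - 1))
        ≤ 3 * (dias G).card := by
      rw [hPbi, Finset.sum_biUnion ?hd]
      case hd =>
        intro S hS S' hS' hne
        exact hdisj S (by simpa using hS) S' (by simpa using hS') hne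
      rw [mul_comm, ← smul_eq_mul, ← Finset.sum_const]
      apply Finset.sum_le_sum
      intro S hS
      -- inner double sum equals sum over I.filter (tau ⊆ S)
      have hmaps : ∀ i ∈ I.filter (fun i => tau G φ i ⊆ S),
          tau G φ i ∈ (tris G).filter (fun T => T ⊆ S) := by
        intro i hi
        rw [Finset.mem_filter] at hi ⊢
        exact ⟨htauI i hi.1, hi.2⟩
      have hfib := Finset.sum_fiberwise_of_maps_to hmaps
        (fun i => (fib G φ i).card - 1)
      have hfilter_eq : ∀ T ∈ (tris G).filter (fun T => T ⊆ S),
          (I.filter (fun i => tau G φ i ⊆ S)).filter (fun i => tau G φ i = T)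
            = I.filter (fun i => tau G φ i = T) := by
        intro T hT
        have hTS : T ⊆ S := (Finset.mem_filter.1 hT).2
        ext i
        simp only [Finset.mem_filter]
        constructor
        · rintro ⟨⟨h1, -⟩, h3⟩
          exact ⟨h1, h3⟩
        · rintro ⟨h1, h3⟩
          exact ⟨⟨h1, h3 ▸ hTS⟩, h3⟩
      rw [← Finset.sum_congr rfl
        (fun T hT => by rw [hfilter_eq T hT])] at hfib
      rw [hfib]
      apply bound_S hk4 hcl hφ (mem_dias.1 hS)
      intro i hi
      simp only [hI, Finset.mem_filter, Finset.mem_univ, true_and] at hi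
      exact hi
    have hsd : (tris G \ P).card + P.card = (tris G).card := by
      rw [Finset.card_sdiff_of_subset hPsub]
      have := Finset.card_le_card hPsub
      omega
    omega


lemma triangleCount_eq : triangleCount G = (tris G).card := by
  classical
  rw [triangleCount, Set.ncard_eq_toFinset_card', Set.toFinset_setOf]
  congr 1

lemma diamondCount_eq : diamondCount G = (dias G).card := by
  classical
  rw [diamondCount, Set.ncard_eq_toFinset_card', Set.toFinset_setOf]
  congr 1

lemma edgeSet_ncard_eq : G.edgeSet.ncard = (edgs G).card := by
  classical
  rw [Set.ncard_eq_toFinset_card']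
  apply Finset.card_nbij
    (i := Sym2.lift ⟨fun a b => ({a,b} : Finset V), fun a b => by exact Finset.pair_comm a b⟩)
  · intro e he
    induction e with
    | _ a b =>
      rw [Finset.mem_coe, Set.mem_toFinset, mem_edgeSet] at he
      simpa using pair_mem_edgs he
  · intro e he e' he' hEq
    induction e with
    | _ a b =>
      induction e' with
      | _ c d =>
        simp only [Set.coe_toFinset, mem_edgeSet] at he he'
        simp only [Sym2.lift_mk] at hEq
        rcases pair_finset_eq hEq he.ne with ⟨rfl, rfl⟩ | ⟨rfl, rfl⟩
        · rfl
        · exact Sym2.eq_swap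
  · intro p hp
    rw [Finset.mem_coe] at hp
    obtain ⟨u, v, huv, rfl⟩ := edgs_elim hp
    refine ⟨s(u, v), ?_, ?_⟩
    · simp [huv]
    · simp

end Dev


theorem stmt16 {V : Type*} [Fintype V] (G : SimpleGraph V)
    (hconn : G.Connected) (hk4 : G.CliqueFree 4)
    (hdiam : EdgeDisjointDiamonds G) :
    (edgeCliqueCoverNumber G : ℤ) =
      G.edgeSet.ncard - 2 * triangleCount G + diamondCount G := by
  classical
  have key := key1 (G := G) hk4 hdiam
  have hup := upper (G := G)
  have hnonempty : ({n | ∃ F : Fin n → Set V, (∀ i, G.IsClique (F i)) ∧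
      ∀ u v, G.Adj u v → ∃ i, u ∈ F i ∧ v ∈ F i} : Set ℕ).Nonempty :=
    ⟨_, cover_mem⟩
  rw [edgeSet_ncard_eq, triangleCount_eq, diamondCount_eq]
  have hθle : edgeCliqueCoverNumber G
      ≤ ((edgs G).filter (fun e => tc G e = 0)).card + (tris G).card := hup
  have hθge : ((edgs G).filter (fun e => tc G e = 0)).card + (tris G).card
      ≤ edgeCliqueCoverNumber G := by
    apply le_csInf hnonempty
    intro m hm
    obtain ⟨F', h1', h2'⟩ := hm
    have := lower_main hk4 hdiam F' h1' h2'
    omega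
  have hθ : edgeCliqueCoverNumber G
      = ((edgs G).filter (fun e => tc G e = 0)).card + (tris G).card :=
    le_antisymm hθle hθge
  rw [hθ]
  push_cast
  omega
end

section
/- For every nonnegative integer l, there exists a connected graph G such that p(G) − k(G) + 1 = l, where p(G) is the phylogeny number and k(G) is the competition number of G. -/
open SimpleGraph

namespace Stmt17Aux

/-- Vertex type: hub ⊕ cycle vertices ⊕ clique vertices. -/
abbrev Vt (l : ℕ) : Type := Unit ⊕ (Fin l × Fin 3) ⊕ Option (Fin l × Fin 4)

@[simp] abbrev hb {l : ℕ} : Vt l := Sum.inl ()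
@[simp] abbrev cyc {l : ℕ} (i : Fin l) (k : Fin 3) : Vt l := Sum.inr (Sum.inl (i, k))
@[simp] abbrev qv {l : ℕ} (o : Option (Fin l × Fin 4)) : Vt l := Sum.inr (Sum.inr o)

def R (l : ℕ) : Vt l → Vt l → Prop := fun x y =>
  (∃ o, x = hb ∧ y = qv o) ∨
  (∃ o o', x = qv o ∧ y = qv o') ∨
  (∃ i, x = hb ∧ y = cyc i 0) ∨
  (∃ i, x = cyc i 0 ∧ y = cyc i 1) ∨
  (∃ i, x = cyc i 1 ∧ y = cyc i 2) ∨
  (∃ i, x = cyc i 2 ∧ y = hb)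

def Gl (l : ℕ) : SimpleGraph (Vt l) := SimpleGraph.fromRel (R l)

variable {l : ℕ}

lemma adj_iff {x y : Vt l} : (Gl l).Adj x y ↔ x ≠ y ∧ (R l x y ∨ R l y x) :=
  SimpleGraph.fromRel_adj _ _ _

lemma adj_hb_qv (o : Option (Fin l × Fin 4)) : (Gl l).Adj hb (qv o) :=
  adj_iff.2 ⟨by simp, Or.inl (Or.inl ⟨o, rfl, rfl⟩)⟩

lemma adj_qv_qv {o o' : Option (Fin l × Fin 4)} (h : o ≠ o') : (Gl l).Adj (qv o) (qv o') :=
  adj_iff.2 ⟨by simp [h], Or.inl (Or.inr (Or.inl ⟨o, o', rfl, rfl⟩))⟩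

lemma adj_hb_cyc0 (i : Fin l) : (Gl l).Adj hb (cyc i 0) :=
  adj_iff.2 ⟨by simp, Or.inl (Or.inr (Or.inr (Or.inl ⟨i, rfl, rfl⟩)))⟩

lemma adj_cyc01 (i : Fin l) : (Gl l).Adj (cyc i 0) (cyc i 1) :=
  adj_iff.2 ⟨by simp, Or.inl (Or.inr (Or.inr (Or.inr (Or.inl ⟨i, rfl, rfl⟩))))⟩

lemma adj_cyc12 (i : Fin l) : (Gl l).Adj (cyc i 1) (cyc i 2) :=
  adj_iff.2 ⟨by simp, Or.inl (Or.inr (Or.inr (Or.inr (Or.inr (Or.inl ⟨i, rfl, rfl⟩)))))⟩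

lemma adj_cyc2_hb (i : Fin l) : (Gl l).Adj (cyc i 2) hb :=
  adj_iff.2 ⟨by simp, Or.inl (Or.inr (Or.inr (Or.inr (Or.inr (Or.inr ⟨i, rfl, rfl⟩)))))⟩

lemma adj_cyc0_elim {i : Fin l} {y : Vt l} (h : (Gl l).Adj (cyc i 0) y) :
    y = hb ∨ y = cyc i 1 := by
  rcases adj_iff.1 h with ⟨-, h | h⟩ <;>
    rcases h with ⟨o, hx, hy⟩ | ⟨o, o', hx, hy⟩ | ⟨j, hx, hy⟩ | ⟨j, hx, hy⟩ | ⟨j, hx, hy⟩ |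
      ⟨j, hx, hy⟩ <;>
    simp_all [Fin.ext_iff]

lemma adj_cyc1_elim {i : Fin l} {y : Vt l} (h : (Gl l).Adj (cyc i 1) y) :
    y = cyc i 0 ∨ y = cyc i 2 := by
  rcases adj_iff.1 h with ⟨-, h | h⟩ <;>
    rcases h with ⟨o, hx, hy⟩ | ⟨o, o', hx, hy⟩ | ⟨j, hx, hy⟩ | ⟨j, hx, hy⟩ | ⟨j, hx, hy⟩ |
      ⟨j, hx, hy⟩ <;>
    simp_all [Fin.ext_iff]

lemma adj_cyc2_elim {i : Fin l} {y : Vt l} (h : (Gl l).Adj (cyc i 2) y) :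
    y = cyc i 1 ∨ y = hb := by
  rcases adj_iff.1 h with ⟨-, h | h⟩ <;>
    rcases h with ⟨o, hx, hy⟩ | ⟨o, o', hx, hy⟩ | ⟨j, hx, hy⟩ | ⟨j, hx, hy⟩ | ⟨j, hx, hy⟩ |
      ⟨j, hx, hy⟩ <;>
    simp_all [Fin.ext_iff]

lemma not_adj_hb_cyc1 (i : Fin l) : ¬ (Gl l).Adj hb (cyc i 1) := by
  intro h
  rcases adj_cyc1_elim h.symm with h' | h' <;> simp [Fin.ext_iff] at h'

lemma not_adj_cyc0_cyc2 (i : Fin l) : ¬ (Gl l).Adj (cyc i 0) (cyc i 2) := by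
  intro h
  rcases adj_cyc0_elim h with h' | h' <;> simp [Fin.ext_iff] at h'

lemma adj_cyc_cyc_imp {i j : Fin l} {k k' : Fin 3} (h : (Gl l).Adj (cyc i k) (cyc j k')) :
    i = j := by
  rcases adj_iff.1 h with ⟨-, h | h⟩ <;>
    rcases h with ⟨o, hx, hy⟩ | ⟨o, o', hx, hy⟩ | ⟨m, hx, hy⟩ | ⟨m, hx, hy⟩ | ⟨m, hx, hy⟩ |
      ⟨m, hx, hy⟩ <;>
    simp_all

lemma connected_Gl : (Gl l).Connected := by
  have hreach : ∀ v : Vt l, (Gl l).Reachable hb v := by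
    intro v
    match v with
    | Sum.inl () => exact SimpleGraph.Reachable.refl _
    | Sum.inr (Sum.inr o) => exact (adj_hb_qv o).reachable
    | Sum.inr (Sum.inl (i, k)) =>
      have h0 : (Gl l).Reachable hb (cyc i 0) := (adj_hb_cyc0 i).reachable
      have h1 : (Gl l).Reachable hb (cyc i 1) := h0.trans (adj_cyc01 i).reachable
      have h2 : (Gl l).Reachable hb (cyc i 2) := ((adj_cyc2_hb i).reachable).symm
      match k with
      | ⟨0, _⟩ => exact h0
      | ⟨1, _⟩ => exact h1
      | ⟨2, _⟩ => exact h2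
  constructor
  · intro u v
    exact (hreach u).symm.trans (hreach v)

end Stmt17Aux
namespace Stmt17Aux

/-- A relation admitting a strictly monotone rank function is acyclic. -/
lemma acyclic_of_rank {α : Type*} {D : α → α → Prop} (f : α → ℕ)
    (hf : ∀ x y, D x y → f x < f y) : ∀ x, ¬ Relation.TransGen D x x := by
  have key : ∀ x y, Relation.TransGen D x y → f x < f y := by
    intro x y h
    induction h with
    | single h => exact hf _ _ h
    | tail _ h ih => exact ih.trans (hf _ _ h)
  intro x hx
  exact lt_irrefl _ (key x x hx)

/-- A finite acyclic relation on a nonempty type has a maximal element. -/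
lemma exists_no_out {α : Type*} [Finite α] [Nonempty α] (D : α → α → Prop)
    (h : ∀ x, ¬ Relation.TransGen D x x) : ∃ m, ∀ y, ¬ D m y := by
  set r : α → α → Prop := fun a b => Relation.TransGen D b a with hr
  have : IsTrans α r := ⟨fun a b c hab hbc => hbc.trans hab⟩
  have : IsIrrefl α r := ⟨fun a ha => h a ha⟩
  have wf : WellFounded r := Finite.wellFounded_of_trans_of_irrefl r
  obtain ⟨m, -, hm⟩ := wf.has_min Set.univ ⟨Classical.arbitrary α, trivial⟩
  refine ⟨m, fun y hy => hm y trivial ?_⟩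
  exact Relation.TransGen.single hy

variable {l : ℕ}

/-- Every vertex of `Gl l` has a neighbor. -/
lemma exists_nbr (u : Vt l) : ∃ v, (Gl l).Adj u v := by
  match u with
  | Sum.inl () => exact ⟨qv none, adj_hb_qv none⟩
  | Sum.inr (Sum.inr o) => exact ⟨hb, (adj_hb_qv o).symm⟩
  | Sum.inr (Sum.inl (i, k)) =>
    match k with
    | ⟨0, _⟩ => exact ⟨cyc i 1, adj_cyc01 i⟩
    | ⟨1, _⟩ => exact ⟨cyc i 2, adj_cyc12 i⟩
    | ⟨2, _⟩ => exact ⟨hb, adj_cyc2_hb i⟩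

/-- endpoints of the `t`-th edge of the `i`-th 4-cycle -/
def ep1 {l : ℕ} (i : Fin l) (t : Fin 4) : Vt l :=
  match t with
  | 0 => hb
  | 1 => cyc i 0
  | 2 => cyc i 1
  | 3 => cyc i 2

def ep2 {l : ℕ} (i : Fin l) (t : Fin 4) : Vt l :=
  match t with
  | 0 => cyc i 0
  | 1 => cyc i 1
  | 2 => cyc i 2
  | 3 => hb

lemma adj_ep (i : Fin l) (t : Fin 4) : (Gl l).Adj (ep1 i t) (ep2 i t) := by
  match t with
  | 0 => exact adj_hb_cyc0 i
  | 1 => exact adj_cyc01 i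
  | 2 => exact adj_cyc12 i
  | 3 => exact adj_cyc2_hb i

/-- The competition digraph witnessing `k(Gl l) ≤ 1`. -/
def Dk (l : ℕ) : (Vt l ⊕ Fin 1) → (Vt l ⊕ Fin 1) → Prop := fun x y =>
  match y with
  | Sum.inl (Sum.inr (Sum.inr (some (i, t)))) => x = Sum.inl (ep1 i t) ∨ x = Sum.inl (ep2 i t)
  | Sum.inr _ => x = Sum.inl hb ∨ ∃ o, x = Sum.inl (qv o)
  | _ => False

lemma Dk_acyclic : ∀ x, ¬ Relation.TransGen (Dk l) x x := by
  apply acyclic_of_rank (f := fun x =>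
    match x with
    | Sum.inl (Sum.inr (Sum.inr _)) => 1
    | Sum.inl _ => 0
    | Sum.inr _ => 2)
  intro x y hxy
  match y with
  | Sum.inl (Sum.inl ()) => exact absurd hxy (by simp [Dk])
  | Sum.inl (Sum.inr (Sum.inl p)) => exact absurd hxy (by simp [Dk])
  | Sum.inl (Sum.inr (Sum.inr none)) => exact absurd hxy (by simp [Dk])
  | Sum.inl (Sum.inr (Sum.inr (some (i, t)))) =>
    rcases hxy with h | h
    · subst h
      match t with
      | 0 => exact Nat.zero_lt_one
      | 1 => exact Nat.zero_lt_one
      | 2 => exact Nat.zero_lt_one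
      | 3 => exact Nat.zero_lt_one
    · subst h
      match t with
      | 0 => exact Nat.zero_lt_one
      | 1 => exact Nat.zero_lt_one
      | 2 => exact Nat.zero_lt_one
      | 3 => exact Nat.zero_lt_one
  | Sum.inr j =>
    rcases hxy with h | ⟨o, h⟩ <;> subst h <;> simp

lemma one_mem_comp :
    1 ∈ {k : ℕ | ∃ D : (Vt l ⊕ Fin k) → (Vt l ⊕ Fin k) → Prop,
      (∀ x, ¬ Relation.TransGen D x x) ∧
      (∀ a b, (a ≠ b ∧ ∃ c, D a c ∧ D b c) ↔
        (∃ u v : Vt l, a = Sum.inl u ∧ b = Sum.inl v ∧ (Gl l).Adj u v))} := by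
  refine ⟨Dk l, Dk_acyclic, fun a b => ⟨?_, ?_⟩⟩
  · rintro ⟨hab, c, hac, hbc⟩
    match c with
    | Sum.inl (Sum.inl ()) => exact absurd hac (by simp [Dk])
    | Sum.inl (Sum.inr (Sum.inl p)) => exact absurd hac (by simp [Dk])
    | Sum.inl (Sum.inr (Sum.inr none)) => exact absurd hac (by simp [Dk])
    | Sum.inl (Sum.inr (Sum.inr (some (i, t)))) =>
      rcases hac with h1 | h1 <;> rcases hbc with h2 | h2 <;> subst h1 <;> subst h2
      · exact absurd rfl hab
      · exact ⟨_, _, rfl, rfl, adj_ep i t⟩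
      · exact ⟨_, _, rfl, rfl, (adj_ep i t).symm⟩
      · exact absurd rfl hab
    | Sum.inr j =>
      rcases hac with h1 | ⟨o1, h1⟩ <;> rcases hbc with h2 | ⟨o2, h2⟩ <;> subst h1 <;> subst h2
      · exact absurd rfl hab
      · exact ⟨_, _, rfl, rfl, adj_hb_qv o2⟩
      · exact ⟨_, _, rfl, rfl, (adj_hb_qv o1).symm⟩
      · refine ⟨_, _, rfl, rfl, adj_qv_qv ?_⟩
        rintro rfl; exact hab rfl
  · rintro ⟨u, v, rfl, rfl, huv⟩
    refine ⟨by simpa using huv.ne, ?_⟩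
    -- find common prey by cases on the edge
    rcases adj_iff.1 huv with ⟨hne, h | h⟩ <;>
      rcases h with ⟨o, hx, hy⟩ | ⟨o, o', hx, hy⟩ | ⟨i, hx, hy⟩ | ⟨i, hx, hy⟩ | ⟨i, hx, hy⟩ |
        ⟨i, hx, hy⟩ <;> subst hx <;> subst hy
    · exact ⟨Sum.inr 0, Or.inl rfl, Or.inr ⟨o, rfl⟩⟩
    · exact ⟨Sum.inr 0, Or.inr ⟨o, rfl⟩, Or.inr ⟨o', rfl⟩⟩
    · exact ⟨Sum.inl (qv (some (i, 0))), Or.inl rfl, Or.inr rfl⟩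
    · exact ⟨Sum.inl (qv (some (i, 1))), Or.inl rfl, Or.inr rfl⟩
    · exact ⟨Sum.inl (qv (some (i, 2))), Or.inl rfl, Or.inr rfl⟩
    · exact ⟨Sum.inl (qv (some (i, 3))), Or.inl rfl, Or.inr rfl⟩
    · exact ⟨Sum.inr 0, Or.inr ⟨o, rfl⟩, Or.inl rfl⟩
    · exact ⟨Sum.inr 0, Or.inr ⟨o', rfl⟩, Or.inr ⟨o, rfl⟩⟩
    · exact ⟨Sum.inl (qv (some (i, 0))), Or.inr rfl, Or.inl rfl⟩
    · exact ⟨Sum.inl (qv (some (i, 1))), Or.inr rfl, Or.inl rfl⟩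
    · exact ⟨Sum.inl (qv (some (i, 2))), Or.inr rfl, Or.inl rfl⟩
    · exact ⟨Sum.inl (qv (some (i, 3))), Or.inr rfl, Or.inl rfl⟩

lemma competition_eq_one : competitionNumber (Gl l) = 1 := by
  set S : Set ℕ := {k : ℕ | ∃ D : (Vt l ⊕ Fin k) → (Vt l ⊕ Fin k) → Prop,
      (∀ x, ¬ Relation.TransGen D x x) ∧
      (∀ a b, (a ≠ b ∧ ∃ c, D a c ∧ D b c) ↔
        (∃ u v : Vt l, a = Sum.inl u ∧ b = Sum.inl v ∧ (Gl l).Adj u v))} with hS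
  have h1 : (1 : ℕ) ∈ S := one_mem_comp
  have h0 : (0 : ℕ) ∉ S := by
    rintro ⟨D, hac, hiff⟩
    obtain ⟨m, hm⟩ := exists_no_out D hac
    match m with
    | Sum.inl u =>
      obtain ⟨v, hv⟩ := exists_nbr u
      obtain ⟨-, c, hc, -⟩ := (hiff (Sum.inl u) (Sum.inl v)).2 ⟨u, v, rfl, rfl, hv⟩
      exact hm c hc
    | Sum.inr j => exact absurd j.2 (by simp)
  have hle : competitionNumber (Gl l) ≤ 1 := Nat.sInf_le h1
  have hmem : competitionNumber (Gl l) ∈ S := Nat.sInf_mem ⟨1, h1⟩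
  rcases Nat.lt_or_ge (competitionNumber (Gl l)) 1 with h | h
  · interval_cases h' : competitionNumber (Gl l)
    · exact absurd hmem h0
  · omega

end Stmt17Aux
namespace Stmt17Aux

variable {l : ℕ}

/-- An injective numbering of the clique vertices. -/
def ι {l : ℕ} : Option (Fin l × Fin 4) → ℕ
  | none => 0
  | some (i, t) => 1 + 4 * i.1 + t.1

lemma ι_inj {o o' : Option (Fin l × Fin 4)} (h : ι o = ι o') : o = o' := by
  match o, o' with
  | none, none => rfl
  | none, some (i, t) => simp only [ι] at h; omega
  | some (i, t), none => simp only [ι] at h; omega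
  | some (i, t), some (i', t') =>
    simp only [ι] at h
    have h1 : t.1 < 4 := t.2
    have h2 : t'.1 < 4 := t'.2
    have : i.1 = i'.1 ∧ t.1 = t'.1 := by omega
    simp [Prod.ext_iff, Fin.ext_iff, this.1, this.2]

/-- The phylogeny digraph witnessing `p(Gl l) ≤ l`. -/
def Dp (l : ℕ) : (Vt l ⊕ Fin l) → (Vt l ⊕ Fin l) → Prop := fun x y =>
  match y with
  | Sum.inl (Sum.inl _) => False
  | Sum.inl (Sum.inr (Sum.inl (i, k))) =>
      (k = 0 ∧ x = Sum.inl hb) ∨ (k = 1 ∧ x = Sum.inl (cyc i 0)) ∨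
      (k = 2 ∧ x = Sum.inl (cyc i 1))
  | Sum.inl (Sum.inr (Sum.inr o)) =>
      x = Sum.inl hb ∨ ∃ o', ι o' < ι o ∧ x = Sum.inl (qv o')
  | Sum.inr i => x = Sum.inl hb ∨ x = Sum.inl (cyc i 2)

lemma Dp_acyclic : ∀ x, ¬ Relation.TransGen (Dp l) x x := by
  apply acyclic_of_rank (f := fun x =>
    match x with
    | Sum.inl (Sum.inl _) => 0
    | Sum.inl (Sum.inr (Sum.inl (_, k))) => 1 + k.1
    | Sum.inl (Sum.inr (Sum.inr o)) => 5 + ι o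
    | Sum.inr _ => 4)
  intro x y hxy
  match y with
  | Sum.inl (Sum.inl u) => exact absurd hxy (by simp [Dp])
  | Sum.inl (Sum.inr (Sum.inl (i, k))) =>
    rcases hxy with ⟨hk, rfl⟩ | ⟨hk, rfl⟩ | ⟨hk, rfl⟩ <;> subst hk <;> simp
  | Sum.inl (Sum.inr (Sum.inr o)) =>
    rcases hxy with rfl | ⟨o', ho', rfl⟩ <;> simp <;> try omega
  | Sum.inr i =>
    rcases hxy with rfl | rfl <;> simp

lemma l_mem_phy : ∃ D, IsPhyDigraphOn (Gl l) l D := by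
  refine ⟨Dp l, Dp_acyclic, ?_, ?_⟩
  · intro u v
    constructor
    · intro huv
      have hne : (Sum.inl u : Vt l ⊕ Fin l) ≠ Sum.inl v := by simpa using huv.ne
      refine ⟨hne, ?_⟩
      rcases adj_iff.1 huv with ⟨hne2, h | h⟩ <;>
        rcases h with ⟨o, hx, hy⟩ | ⟨o, o', hx, hy⟩ | ⟨i, hx, hy⟩ | ⟨i, hx, hy⟩ | ⟨i, hx, hy⟩ |
          ⟨i, hx, hy⟩ <;> subst hx <;> subst hy
      · exact Or.inl (Or.inl rfl)
      · -- qv o ~ qv o'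
        have hoo : o ≠ o' := by rintro rfl; exact hne2 rfl
        rcases Nat.lt_or_ge (ι o) (ι o') with hlt | hge
        · exact Or.inl (Or.inr ⟨o, hlt, rfl⟩)
        · have : ι o' < ι o := lt_of_le_of_ne hge (fun hh => hoo (ι_inj hh.symm))
          exact Or.inr (Or.inl (Or.inr ⟨o', this, rfl⟩))
      · exact Or.inl (Or.inl ⟨rfl, rfl⟩)
      · exact Or.inl (Or.inr (Or.inl ⟨rfl, rfl⟩))
      · exact Or.inl (Or.inr (Or.inr ⟨rfl, rfl⟩))
      · -- cyc i 2 ~ hb : common prey extra i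
        exact Or.inr (Or.inr ⟨Sum.inr i, Or.inr rfl, Or.inl rfl⟩)
      · exact Or.inr (Or.inl (Or.inl rfl))
      · have hoo : o' ≠ o := by rintro rfl; exact hne2 rfl
        rcases Nat.lt_or_ge (ι o') (ι o) with hlt | hge
        · exact Or.inl (Or.inr ⟨o', hlt, rfl⟩)
        · have : ι o < ι o' := lt_of_le_of_ne hge (fun hh => hoo (ι_inj hh.symm))
          exact Or.inr (Or.inl (Or.inr ⟨o, this, rfl⟩))
      · exact Or.inr (Or.inl (Or.inl ⟨rfl, rfl⟩))
      · exact Or.inr (Or.inl (Or.inr (Or.inl ⟨rfl, rfl⟩)))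
      · exact Or.inr (Or.inl (Or.inr (Or.inr ⟨rfl, rfl⟩)))
      · exact Or.inr (Or.inr ⟨Sum.inr i, Or.inl rfl, Or.inr rfl⟩)
    · rintro ⟨hne, harc | harc | ⟨w, hu, hv⟩⟩
      · -- arc from u to v
        match v, harc with
        | Sum.inr (Sum.inl (i, k)), harc =>
          rcases harc with ⟨rfl, hu⟩ | ⟨rfl, hu⟩ | ⟨rfl, hu⟩ <;>
            rcases Sum.inl.inj hu with rfl
          · exact adj_hb_cyc0 i
          · exact adj_cyc01 i
          · exact adj_cyc12 i
        | Sum.inr (Sum.inr o), harc =>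
          rcases harc with hu | ⟨o', ho', hu⟩ <;> rcases Sum.inl.inj hu with rfl
          · exact adj_hb_qv o
          · exact adj_qv_qv (fun hh => hne (by rw [hh]))
      · -- arc from v to u
        match u, harc with
        | Sum.inr (Sum.inl (i, k)), harc =>
          rcases harc with ⟨rfl, hv⟩ | ⟨rfl, hv⟩ | ⟨rfl, hv⟩ <;>
            rcases Sum.inl.inj hv with rfl
          · exact (adj_hb_cyc0 i).symm
          · exact (adj_cyc01 i).symm
          · exact (adj_cyc12 i).symm
        | Sum.inr (Sum.inr o), harc =>
          rcases harc with hv | ⟨o', ho', hv⟩ <;> rcases Sum.inl.inj hv with rfl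
          · exact (adj_hb_qv o).symm
          · exact (adj_qv_qv (fun hh => hne (by rw [hh]))).symm
      · -- common prey w
        match w with
        | Sum.inl (Sum.inl u') => exact absurd hu (by simp [Dp])
        | Sum.inl (Sum.inr (Sum.inl (i, k))) =>
          exfalso
          rcases hu with ⟨hk1, hu⟩ | ⟨hk1, hu⟩ | ⟨hk1, hu⟩ <;>
            rcases hv with ⟨hk2, hv⟩ | ⟨hk2, hv⟩ | ⟨hk2, hv⟩ <;>
              first
                | (exact hne (by rw [← Sum.inl.inj hu] at hv; exact hv.symm ▸ rfl))
                | (subst hk1; exact absurd hk2 (by decide))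
        | Sum.inl (Sum.inr (Sum.inr o)) =>
          rcases hu with hu | ⟨o1, ho1, hu⟩ <;> rcases hv with hv | ⟨o2, ho2, hv⟩ <;>
            rcases Sum.inl.inj hu with rfl <;> rcases Sum.inl.inj hv with rfl
          · exact absurd rfl hne
          · exact adj_hb_qv o2
          · exact (adj_hb_qv o1).symm
          · exact adj_qv_qv (fun hh => hne (by rw [hh]))
        | Sum.inr i =>
          rcases hu with hu | hu <;> rcases hv with hv | hv <;>
            rcases Sum.inl.inj hu with rfl <;> rcases Sum.inl.inj hv with rfl
          · exact absurd rfl hne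
          · exact (adj_cyc2_hb i).symm
          · exact adj_cyc2_hb i
          · exact absurd rfl hne
  · -- no arcs from extras into V
    intro j v hD
    match v, hD with
    | Sum.inl u, hD => exact hD
    | Sum.inr (Sum.inl (i, k)), hD =>
      rcases hD with ⟨-, hh⟩ | ⟨-, hh⟩ | ⟨-, hh⟩ <;> exact absurd hh (by simp)
    | Sum.inr (Sum.inr o), hD =>
      rcases hD with hh | ⟨o', -, hh⟩ <;> exact absurd hh (by simp)

end Stmt17Aux
namespace Stmt17Aux

variable {l : ℕ}

lemma phy_lower {r : ℕ} (D : (Vt l ⊕ Fin r) → (Vt l ⊕ Fin r) → Prop)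
    (hD : IsPhyDigraphOn (Gl l) r D) : l ≤ r := by
  obtain ⟨hac, hiff, hext⟩ := hD
  have noDself : ∀ x, ¬ D x x := fun x hx => hac x (Relation.TransGen.single hx)
  have preyAdj : ∀ {u v : Vt l} {w}, u ≠ v → D (Sum.inl u) w → D (Sum.inl v) w →
      (Gl l).Adj u v := by
    intro u v w hne h1 h2
    exact (hiff u v).2 ⟨by simpa using hne, Or.inr (Or.inr ⟨w, h1, h2⟩)⟩
  have arcAdj : ∀ {u v : Vt l}, D (Sum.inl u) (Sum.inl v) → u ≠ v → (Gl l).Adj u v := by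
    intro u v h hne
    exact (hiff u v).2 ⟨by simpa using hne, Or.inl h⟩
  -- each 4-cycle sends some vertex to an extra
  have key : ∀ i : Fin l, ∃ (e : Fin r) (k : Fin 3), D (Sum.inl (cyc i k)) (Sum.inr e) := by
    intro i
    by_contra hcon
    push_neg at hcon
    -- edge hb ~ cyc i 0
    have arc1 : D (Sum.inl hb) (Sum.inl (cyc i 0)) ∨ D (Sum.inl (cyc i 0)) (Sum.inl hb) := by
      obtain ⟨-, h | h | ⟨w, hw1, hw2⟩⟩ := (hiff _ _).1 (adj_hb_cyc0 i)
      · exact Or.inl h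
      · exact Or.inr h
      exfalso
      match w with
      | Sum.inr e => exact hcon e 0 hw2
      | Sum.inl w' =>
        by_cases h0 : w' = cyc i 0
        · exact noDself _ (h0 ▸ hw2)
        by_cases hh : w' = hb
        · exact noDself _ (hh ▸ hw1)
        rcases adj_cyc0_elim (arcAdj hw2 (fun e => h0 e.symm)) with e | e
        · exact hh e
        · exact not_adj_hb_cyc1 i (e ▸ arcAdj hw1 (fun e' => hh e'.symm))
    -- edge cyc i 0 ~ cyc i 1
    have arc2 : D (Sum.inl (cyc i 0)) (Sum.inl (cyc i 1)) ∨
        D (Sum.inl (cyc i 1)) (Sum.inl (cyc i 0)) := by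
      obtain ⟨-, h | h | ⟨w, hw1, hw2⟩⟩ := (hiff _ _).1 (adj_cyc01 i)
      · exact Or.inl h
      · exact Or.inr h
      exfalso
      match w with
      | Sum.inr e => exact hcon e 0 hw1
      | Sum.inl w' =>
        by_cases h0 : w' = cyc i 0
        · exact noDself _ (h0 ▸ hw1)
        by_cases h1 : w' = cyc i 1
        · exact noDself _ (h1 ▸ hw2)
        rcases adj_cyc1_elim (arcAdj hw2 (fun e => h1 e.symm)) with e | e
        · exact h0 e
        · exact not_adj_cyc0_cyc2 i (e ▸ arcAdj hw1 (fun e' => h0 e'.symm))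
    -- edge cyc i 1 ~ cyc i 2
    have arc3 : D (Sum.inl (cyc i 1)) (Sum.inl (cyc i 2)) ∨
        D (Sum.inl (cyc i 2)) (Sum.inl (cyc i 1)) := by
      obtain ⟨-, h | h | ⟨w, hw1, hw2⟩⟩ := (hiff _ _).1 (adj_cyc12 i)
      · exact Or.inl h
      · exact Or.inr h
      exfalso
      match w with
      | Sum.inr e => exact hcon e 1 hw1
      | Sum.inl w' =>
        by_cases h1 : w' = cyc i 1
        · exact noDself _ (h1 ▸ hw1)
        by_cases h2 : w' = cyc i 2
        · exact noDself _ (h2 ▸ hw2)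
        rcases adj_cyc2_elim (arcAdj hw2 (fun e => h2 e.symm)) with e | e
        · exact h1 e
        · exact not_adj_hb_cyc1 i ((e ▸ arcAdj hw1 (fun e' => h1 e'.symm)).symm)
    -- edge cyc i 2 ~ hb
    have arc4 : D (Sum.inl (cyc i 2)) (Sum.inl hb) ∨ D (Sum.inl hb) (Sum.inl (cyc i 2)) := by
      obtain ⟨-, h | h | ⟨w, hw1, hw2⟩⟩ := (hiff _ _).1 (adj_cyc2_hb i)
      · exact Or.inl h
      · exact Or.inr h
      exfalso
      match w with
      | Sum.inr e => exact hcon e 2 hw1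
      | Sum.inl w' =>
        by_cases h2 : w' = cyc i 2
        · exact noDself _ (h2 ▸ hw1)
        by_cases hh : w' = hb
        · exact noDself _ (hh ▸ hw2)
        rcases adj_cyc2_elim (arcAdj hw1 (fun e => h2 e.symm)) with e | e
        · exact not_adj_hb_cyc1 i (e ▸ arcAdj hw2 (fun e' => hh e'.symm))
        · exact hh e
    -- contradiction via orientation of the 4-cycle
    have c1 : D (Sum.inl hb) (Sum.inl (cyc i 0)) →
        D (Sum.inl (cyc i 1)) (Sum.inl (cyc i 0)) → False := fun u v =>
      not_adj_hb_cyc1 i (preyAdj (by simp) u v)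
    have c2 : D (Sum.inl (cyc i 0)) (Sum.inl (cyc i 1)) →
        D (Sum.inl (cyc i 2)) (Sum.inl (cyc i 1)) → False := fun u v =>
      not_adj_cyc0_cyc2 i (preyAdj (by simp [Fin.ext_iff]) u v)
    have c3 : D (Sum.inl (cyc i 1)) (Sum.inl (cyc i 2)) →
        D (Sum.inl hb) (Sum.inl (cyc i 2)) → False := fun u v =>
      not_adj_hb_cyc1 i (preyAdj (by simp) v u)
    have c4 : D (Sum.inl (cyc i 2)) (Sum.inl hb) →
        D (Sum.inl (cyc i 0)) (Sum.inl hb) → False := fun u v =>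
      not_adj_cyc0_cyc2 i (preyAdj (by simp [Fin.ext_iff]) v u)
    rcases arc1 with h1 | h1 <;> rcases arc2 with h2 | h2 <;> rcases arc3 with h3 | h3 <;>
      rcases arc4 with h4 | h4 <;>
      first
        | exact c1 h1 h2
        | exact c2 h2 h3
        | exact c3 h3 h4
        | exact c4 h4 h1
        | exact hac (Sum.inl hb)
            ((((Relation.TransGen.single h1).tail h2).tail h3).tail h4)
        | exact hac (Sum.inl hb)
            ((((Relation.TransGen.single h4).tail h3).tail h2).tail h1)
  choose f g hfg using key
  have hinj : Function.Injective f := by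
    intro i j hij
    by_contra hne'
    have hx : cyc i (g i) ≠ cyc j (g j) := by
      simp only [cyc, ne_eq, Sum.inr.injEq, Sum.inl.injEq, Prod.mk.injEq, not_and]
      intro h; exact absurd h hne'
    have hAdj := preyAdj hx (hfg i) (hij ▸ hfg j)
    exact hne' (adj_cyc_cyc_imp hAdj)
  simpa using Fintype.card_le_of_injective f hinj

lemma phylogeny_eq : phylogenyNumber (Gl l) = l := by
  apply le_antisymm (Nat.sInf_le l_mem_phy)
  exact le_csInf ⟨l, l_mem_phy⟩ (fun r hr => by obtain ⟨D, hD⟩ := hr; exact phy_lower D hD)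

end Stmt17Aux
theorem stmt17 (l : ℕ) :
    ∃ (V : Type) (_ : Fintype V) (G : SimpleGraph V),
      G.Connected ∧ (phylogenyNumber G : ℤ) - competitionNumber G + 1 = l := by
  refine ⟨Stmt17Aux.Vt l, inferInstance, Stmt17Aux.Gl l, Stmt17Aux.connected_Gl, ?_⟩
  rw [Stmt17Aux.phylogeny_eq, Stmt17Aux.competition_eq_one]
  push_cast
  ring
end
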